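/- arXiv:0804.2773 — 4 statements merged into one kernel-verified Lean document; each statement's English description precedes it below -/
import Mathlib

section
/- Let E ⊆ ℤ have positive upper Banach density. Then there exist a dynamical system (Y, 𝔅, μ, T) (a probability measure space with an invertible measurable measure-preserving transformation T) and a set A ∈ 𝔅 with μ(A) > 0 such that for every finite set of integers U, the upper Banach density of ⋂_{n∈U} (E − n) is at least μ(⋂_{n∈U} T^n A). -/
open Filter MeasureTheory Set
open scoped Classical Topology NNReal ENNReal

/-- The upper Banach density of a set `E ⊆ ℤ`:
`d*(E) = limsup_{N - M → ∞} |E ∩ [M,N)| / (N - M)`. -/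
noncomputable def upperBanachDensity (E : Set ℤ) : ℝ :=
  Filter.limsup
    (fun p : ℤ × ℤ =>
      (((Finset.Ico p.1 p.2).filter (fun m => m ∈ E)).card : ℝ) / ((p.2 - p.1 : ℤ) : ℝ))
    (Filter.comap (fun p : ℤ × ℤ => p.2 - p.1) Filter.atTop)

noncomputable def rat (q : ℤ → Prop) (p : ℤ × ℤ) : ℝ :=
  (((Finset.Ico p.1 p.2).filter q).card : ℝ) / ((p.2 - p.1 : ℤ) : ℝ)

lemma rat_of_le (q : ℤ → Prop) {p : ℤ × ℤ} (h : p.2 ≤ p.1) : rat q p = 0 := by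
  unfold rat
  rw [Finset.Ico_eq_empty (not_lt.2 h)]
  simp

lemma card_filter_le_real (q : ℤ → Prop) {a b : ℤ} (h : a < b) :
    (((Finset.Ico a b).filter q).card : ℝ) ≤ ((b - a : ℤ) : ℝ) := by
  have h1 : ((Finset.Ico a b).filter q).card ≤ (b - a).toNat := by
    rw [← Int.card_Ico a b]; exact Finset.card_filter_le _ _
  have h2 : ((b - a).toNat : ℤ) = b - a := Int.toNat_of_nonneg (by omega)
  calc (((Finset.Ico a b).filter q).card : ℝ) ≤ ((b - a).toNat : ℝ) := by exact_mod_cast h1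
  _ = ((b - a : ℤ) : ℝ) := by exact_mod_cast congrArg (fun z : ℤ => (z : ℝ)) h2

lemma rat_nonneg (q : ℤ → Prop) (p : ℤ × ℤ) : 0 ≤ rat q p := by
  rcases le_or_gt p.2 p.1 with h | h
  · simp [rat_of_le q h]
  · have : (0:ℝ) < ((p.2 - p.1 : ℤ) : ℝ) := by exact_mod_cast (by omega : (0:ℤ) < p.2 - p.1)
    exact div_nonneg (by positivity) this.le

lemma rat_le_one (q : ℤ → Prop) (p : ℤ × ℤ) : rat q p ≤ 1 := by
  rcases le_or_gt p.2 p.1 with h | h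
  · simp [rat_of_le q h]
  · have hpos : (0:ℝ) < ((p.2 - p.1 : ℤ) : ℝ) := by exact_mod_cast (by omega : (0:ℤ) < p.2 - p.1)
    rw [rat, div_le_one hpos]
    exact card_filter_le_real q h

lemma rat_mono {q r : ℤ → Prop} (h : ∀ m, q m → r m) (p : ℤ × ℤ) : rat q p ≤ rat r p := by
  rcases le_or_gt p.2 p.1 with hle | hlt
  · simp [rat_of_le _ hle]
  · have hpos : (0:ℝ) < ((p.2 - p.1 : ℤ) : ℝ) := by exact_mod_cast (by omega : (0:ℤ) < p.2 - p.1)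
    unfold rat
    rw [div_le_div_iff_of_pos_right hpos]
    have : (Finset.Ico p.1 p.2).filter q ⊆ (Finset.Ico p.1 p.2).filter r := by
      intro m hm
      rw [Finset.mem_filter] at hm ⊢
      exact ⟨hm.1, h m hm.2⟩
    exact_mod_cast Finset.card_le_card this

lemma rat_union_le {q r s : ℤ → Prop} (h : ∀ m, s m → q m ∨ r m) (p : ℤ × ℤ) :
    rat s p ≤ rat q p + rat r p := by
  rcases le_or_gt p.2 p.1 with hle | hlt
  · have h1 := rat_nonneg q p
    have h2 := rat_nonneg r p
    rw [rat_of_le _ hle]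
    linarith
  · have hpos : (0:ℝ) < ((p.2 - p.1 : ℤ) : ℝ) := by exact_mod_cast (by omega : (0:ℤ) < p.2 - p.1)
    unfold rat
    rw [← add_div, div_le_div_iff_of_pos_right hpos]
    have hsub : (Finset.Ico p.1 p.2).filter s ⊆
        (Finset.Ico p.1 p.2).filter q ∪ (Finset.Ico p.1 p.2).filter r := by
      intro m hm
      rw [Finset.mem_filter] at hm
      rw [Finset.mem_union, Finset.mem_filter, Finset.mem_filter]
      rcases h m hm.2 with h' | h'
      · exact Or.inl ⟨hm.1, h'⟩
      · exact Or.inr ⟨hm.1, h'⟩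
    calc (((Finset.Ico p.1 p.2).filter s).card : ℝ)
        ≤ (((Finset.Ico p.1 p.2).filter q ∪ (Finset.Ico p.1 p.2).filter r).card : ℝ) := by
          exact_mod_cast Finset.card_le_card hsub
    _ ≤ _ := by exact_mod_cast Finset.card_union_le _ _

lemma rat_add_of_disjoint {q r s : ℤ → Prop} (hs : ∀ m, s m ↔ (q m ∨ r m))
    (h : ∀ m, ¬(q m ∧ r m)) (p : ℤ × ℤ) :
    rat s p = rat q p + rat r p := by
  unfold rat
  rw [← add_div]
  congr 1
  have he : (Finset.Ico p.1 p.2).filter s =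
      (Finset.Ico p.1 p.2).filter q ∪ (Finset.Ico p.1 p.2).filter r := by
    ext m
    simp only [Finset.mem_filter, Finset.mem_union, hs m]
    tauto
  have hdis : Disjoint ((Finset.Ico p.1 p.2).filter q) ((Finset.Ico p.1 p.2).filter r) := by
    rw [Finset.disjoint_filter]
    intro x _ hq hr
    exact h x ⟨hq, hr⟩
  rw [he, Finset.card_union_of_disjoint hdis]
  push_cast; ring

lemma rat_congr {q r : ℤ → Prop} (h : ∀ m, q m ↔ r m) : rat q = rat r := by
  have : q = r := funext fun m => propext (h m)
  rw [this]

lemma shift_card (q q' : ℤ → Prop) (j a b : ℤ) (h : ∀ m, q' m ↔ q (m - j)) :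
    ((Finset.Ico a b).filter q').card = ((Finset.Ico (a - j) (b - j)).filter q).card := by
  apply Finset.card_bij (fun m _ => m - j)
  · intro m hm
    rw [Finset.mem_filter, Finset.mem_Ico] at hm ⊢
    exact ⟨by omega, (h m).1 hm.2⟩
  · intro m hm m' hm' hmm
    omega
  · intro m hm
    refine ⟨m + j, ?_, by ring⟩
    rw [Finset.mem_filter, Finset.mem_Ico] at hm ⊢
    refine ⟨by omega, (h (m + j)).2 (by simpa using hm.2)⟩

lemma card_shift_le (q : ℤ → Prop) (j a b : ℤ) :
    ((Finset.Ico (a - j) (b - j)).filter q).card ≤ ((Finset.Ico a b).filter q).card + j.natAbs := by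
  have hsub : (Finset.Ico (a - j) (b - j)).filter q ⊆
      ((Finset.Ico a b).filter q) ∪ (Finset.Ico (a - j) a ∪ Finset.Ico b (b - j)) := by
    intro m hm
    rw [Finset.mem_filter, Finset.mem_Ico] at hm
    rw [Finset.mem_union, Finset.mem_union, Finset.mem_filter, Finset.mem_Ico,
      Finset.mem_Ico, Finset.mem_Ico]
    by_cases hm2 : a ≤ m ∧ m < b
    · exact Or.inl ⟨hm2, hm.2⟩
    · exact Or.inr (by omega)
  calc ((Finset.Ico (a - j) (b - j)).filter q).card
      ≤ (((Finset.Ico a b).filter q) ∪ (Finset.Ico (a - j) a ∪ Finset.Ico b (b - j))).card :=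
        Finset.card_le_card hsub
  _ ≤ ((Finset.Ico a b).filter q).card + (Finset.Ico (a - j) a ∪ Finset.Ico b (b - j)).card :=
        Finset.card_union_le _ _
  _ ≤ ((Finset.Ico a b).filter q).card + ((Finset.Ico (a - j) a).card + (Finset.Ico b (b - j)).card) := by
        have := Finset.card_union_le (Finset.Ico (a - j) a) (Finset.Ico b (b - j))
        omega
  _ ≤ _ := by
        rw [Int.card_Ico, Int.card_Ico]
        omega

lemma card_shift_ge (q : ℤ → Prop) (j a b : ℤ) :
    ((Finset.Ico a b).filter q).card ≤ ((Finset.Ico (a - j) (b - j)).filter q).card + j.natAbs := by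
  have := card_shift_le q (-j) (a - j) (b - j)
  simp only [sub_neg_eq_add, sub_add_cancel] at this
  simpa [Int.natAbs_neg] using this

lemma rat_shift_bound (q q' : ℤ → Prop) (j : ℤ) (h : ∀ m, q' m ↔ q (m - j)) (p : ℤ × ℤ)
    (hlt : p.1 < p.2) :
    |rat q' p - rat q p| ≤ (j.natAbs : ℝ) / ((p.2 - p.1 : ℤ) : ℝ) := by
  have hpos : (0:ℝ) < ((p.2 - p.1 : ℤ) : ℝ) := by exact_mod_cast (by omega : (0:ℤ) < p.2 - p.1)
  unfold rat
  rw [div_sub_div_same, abs_div, abs_of_pos hpos, div_le_div_iff_of_pos_right hpos,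
    shift_card q q' j p.1 p.2 h]
  rw [abs_sub_le_iff]
  constructor
  · have h1 := card_shift_le q j p.1 p.2
    have h2 : (((Finset.Ico (p.1 - j) (p.2 - j)).filter q).card : ℝ) ≤
        (((Finset.Ico p.1 p.2).filter q).card : ℝ) + (j.natAbs : ℝ) := by exact_mod_cast h1
    linarith
  · have h1 := card_shift_ge q j p.1 p.2
    have h2 : (((Finset.Ico p.1 p.2).filter q).card : ℝ) ≤
        (((Finset.Ico (p.1 - j) (p.2 - j)).filter q).card : ℝ) + (j.natAbs : ℝ) := by exact_mod_cast h1
    linarith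

noncomputable def Fl : Filter (ℤ × ℤ) := Filter.comap (fun p : ℤ × ℤ => p.2 - p.1) Filter.atTop

lemma ubd_eq (E : Set ℤ) : upperBanachDensity E = limsup (rat (fun m => m ∈ E)) Fl := rfl

instance Fl_neBot : Fl.NeBot := by
  apply Filter.comap_neBot
  intro t ht
  rcases mem_atTop_sets.1 ht with ⟨a, ha⟩
  exact ⟨(0, a), ha _ (by simp)⟩

lemma tendsto_sub_Fl : Tendsto (fun p : ℤ × ℤ => ((p.2 - p.1 : ℤ) : ℝ)) Fl atTop :=
  tendsto_intCast_atTop_atTop.comp tendsto_comap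

lemma eventually_lt_Fl : ∀ᶠ p : ℤ × ℤ in Fl, p.1 < p.2 := by
  have : ∀ᶠ p : ℤ × ℤ in Fl, (1:ℤ) ≤ p.2 - p.1 := tendsto_comap.eventually (eventually_ge_atTop 1)
  exact this.mono fun p h => by omega

-- ultrafilter limits
lemma exists_tendsto_of_bounded (𝒰 : Ultrafilter (ℤ × ℤ)) (f : ℤ × ℤ → ℝ)
    (h : ∀ p, f p ∈ Icc (0:ℝ) 1) : ∃ x, Tendsto f 𝒰 (𝓝 x) := by
  obtain ⟨x, -, hx⟩ := (isCompact_Icc (a := (0:ℝ)) (b := 1)).ultrafilter_le_nhds (𝒰.map f)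
    (by rw [Ultrafilter.coe_map, le_principal_iff]; exact Filter.mem_map.2 (by
      filter_upwards [] using fun p => h p))
  exact ⟨x, hx⟩

lemma limsup_le_ubd (E : Set ℤ) (𝒰 : Ultrafilter (ℤ × ℤ)) (h𝒰 : (𝒰 : Filter (ℤ × ℤ)) ≤ Fl)
    {q : ℤ → Prop} {S : Set ℤ} (hq : ∀ m, q m ↔ m ∈ S) {x : ℝ}
    (hx : Tendsto (rat q) 𝒰 (𝓝 x)) : x ≤ upperBanachDensity S := by
  have h1 : limsup (rat q) (𝒰 : Filter (ℤ × ℤ)) = x := hx.limsup_eq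
  have hco : IsCoboundedUnder (· ≤ ·) (𝒰 : Filter (ℤ × ℤ)) (rat q) :=
    (isBoundedUnder_of ⟨0, fun p => rat_nonneg q p⟩ :
      IsBoundedUnder (· ≥ ·) (𝒰 : Filter (ℤ × ℤ)) (rat q)).isCoboundedUnder_le
  have hbd : IsBoundedUnder (· ≤ ·) Fl (rat q) :=
    isBoundedUnder_of ⟨1, fun p => rat_le_one q p⟩
  have h2 : limsup (rat q) (𝒰 : Filter (ℤ × ℤ)) ≤ limsup (rat q) Fl :=
    limsup_le_limsup_of_le h𝒰 hco hbd
  rw [h1] at h2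
  rw [ubd_eq]
  have hqs : (fun m => m ∈ S) = q := funext fun m => propext (hq m).symm
  rw [show rat (fun m => m ∈ S) = rat q from congrArg rat hqs]
  exact h2

lemma rat_top {q : ℤ → Prop} (hq : ∀ m, q m) {p : ℤ × ℤ} (h : p.1 < p.2) : rat q p = 1 := by
  have hpos : (0:ℝ) < ((p.2 - p.1 : ℤ) : ℝ) := by exact_mod_cast (by omega : (0:ℤ) < p.2 - p.1)
  rw [rat, Finset.filter_true_of_mem (fun m _ => hq m), div_eq_one_iff_eq hpos.ne']
  rw [Int.card_Ico]
  exact_mod_cast congrArg (fun z : ℤ => (z : ℝ)) (Int.toNat_of_nonneg (by omega : (0:ℤ) ≤ p.2 - p.1))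

def Tsh (n : ℤ) (x : ℤ → Bool) : ℤ → Bool := fun k => x (k - n)

noncomputable def yseq (E : Set ℤ) (m : ℤ) : ℤ → Bool := fun n => if m + n ∈ E then true else false

noncomputable def rS (E : Set ℤ) (C : Set (ℤ → Bool)) : ℤ × ℤ → ℝ :=
  rat (fun m => yseq E m ∈ C)

noncomputable def dl (E : Set ℤ) (𝒰 : Ultrafilter (ℤ × ℤ)) (C : Set (ℤ → Bool)) : ℝ :=
  Classical.choose (exists_tendsto_of_bounded 𝒰 (rS E C)
    (fun p => ⟨rat_nonneg _ p, rat_le_one _ p⟩))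

lemma dl_tendsto (E : Set ℤ) (𝒰 : Ultrafilter (ℤ × ℤ)) (C : Set (ℤ → Bool)) :
    Tendsto (rS E C) 𝒰 (𝓝 (dl E 𝒰 C)) :=
  Classical.choose_spec (exists_tendsto_of_bounded 𝒰 (rS E C)
    (fun p => ⟨rat_nonneg _ p, rat_le_one _ p⟩))

variable {E : Set ℤ} {𝒰 : Ultrafilter (ℤ × ℤ)}

lemma dl_nonneg (C : Set (ℤ → Bool)) : 0 ≤ dl E 𝒰 C :=
  ge_of_tendsto (dl_tendsto E 𝒰 C) (Eventually.of_forall fun p => rat_nonneg _ p)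

lemma dl_le_one (C : Set (ℤ → Bool)) : dl E 𝒰 C ≤ 1 :=
  le_of_tendsto (dl_tendsto E 𝒰 C) (Eventually.of_forall fun p => rat_le_one _ p)

lemma dl_mono {C D : Set (ℤ → Bool)} (h : C ⊆ D) : dl E 𝒰 C ≤ dl E 𝒰 D :=
  le_of_tendsto_of_tendsto (dl_tendsto E 𝒰 C) (dl_tendsto E 𝒰 D)
    (Eventually.of_forall fun p => rat_mono (fun m hm => h hm) p)

lemma dl_univ (h𝒰 : (𝒰 : Filter (ℤ × ℤ)) ≤ Fl) : dl E 𝒰 univ = 1 := by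
  have h1 : Tendsto (rS E univ) 𝒰 (𝓝 1) := by
    have hev : ∀ᶠ p : ℤ × ℤ in 𝒰, rS E univ p = 1 :=
      (eventually_lt_Fl.filter_mono h𝒰).mono fun p hp => rat_top (fun m => mem_univ _) hp
    have heq : (fun _ : ℤ × ℤ => (1:ℝ)) =ᶠ[(𝒰 : Filter (ℤ × ℤ))] rS E univ :=
      hev.mono fun p hp => hp.symm
    exact Tendsto.congr' heq tendsto_const_nhds
  exact tendsto_nhds_unique (dl_tendsto E 𝒰 univ) h1

lemma dl_union_disjoint {C D : Set (ℤ → Bool)} (h : Disjoint C D) :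
    dl E 𝒰 (C ∪ D) = dl E 𝒰 C + dl E 𝒰 D := by
  have key : ∀ p, rS E (C ∪ D) p = rS E C p + rS E D p := by
    intro p
    refine rat_add_of_disjoint (fun m => ?_) (fun m hm => ?_) p
    · exact mem_union _ _ _
    · exact Set.disjoint_left.1 h hm.1 hm.2
  have h1 : Tendsto (rS E (C ∪ D)) 𝒰 (𝓝 (dl E 𝒰 C + dl E 𝒰 D)) := by
    rw [show rS E (C ∪ D) = fun p => rS E C p + rS E D p from funext key]
    exact (dl_tendsto E 𝒰 C).add (dl_tendsto E 𝒰 D)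
  exact tendsto_nhds_unique (dl_tendsto E 𝒰 (C ∪ D)) h1

lemma dl_union_le (C D : Set (ℤ → Bool)) : dl E 𝒰 (C ∪ D) ≤ dl E 𝒰 C + dl E 𝒰 D := by
  refine le_of_tendsto_of_tendsto (dl_tendsto E 𝒰 (C ∪ D))
    ((dl_tendsto E 𝒰 C).add (dl_tendsto E 𝒰 D))
    (Eventually.of_forall fun p => rat_union_le (fun m hm => hm) p)

lemma Tsh_yseq (j m : ℤ) : Tsh j (yseq E m) = yseq E (m - j) := by
  funext k
  show (if m + (k - j) ∈ E then true else false) = (if m - j + k ∈ E then true else false)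
  rw [show m + (k - j) = m - j + k by ring]

lemma dl_shift (h𝒰 : (𝒰 : Filter (ℤ × ℤ)) ≤ Fl) (j : ℤ) (C : Set (ℤ → Bool)) :
    dl E 𝒰 (Tsh j ⁻¹' C) = dl E 𝒰 C := by
  have hb : ∀ᶠ p : ℤ × ℤ in 𝒰, ‖rS E (Tsh j ⁻¹' C) p - rS E C p‖ ≤
      (j.natAbs : ℝ) / ((p.2 - p.1 : ℤ) : ℝ) := by
    refine (eventually_lt_Fl.filter_mono h𝒰).mono fun p hp => ?_
    have : ∀ m, yseq E m ∈ Tsh j ⁻¹' C ↔ yseq E (m - j) ∈ C := by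
      intro m
      rw [mem_preimage, Tsh_yseq]
    exact rat_shift_bound (fun m => yseq E m ∈ C) (fun m => yseq E m ∈ Tsh j ⁻¹' C) j this p hp
  have h0 : Tendsto (fun p => rS E (Tsh j ⁻¹' C) p - rS E C p) 𝒰 (𝓝 0) := by
    refine squeeze_zero_norm' hb ?_
    exact Tendsto.div_atTop tendsto_const_nhds (tendsto_sub_Fl.mono_left h𝒰)
  have h1 : Tendsto (rS E (Tsh j ⁻¹' C)) 𝒰 (𝓝 (dl E 𝒰 C + 0)) := by
    have := (dl_tendsto E 𝒰 C).add h0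
    simpa using this.congr fun p => by ring
  rw [add_zero] at h1
  exact tendsto_nhds_unique (dl_tendsto E 𝒰 (Tsh j ⁻¹' C)) h1

lemma exists_clopen_sep {K₁ K₂ : Set (ℤ → Bool)} (h1 : IsCompact K₁) (h2 : IsClosed K₂)
    (hd : Disjoint K₁ K₂) : ∃ D : Set (ℤ → Bool), IsClopen D ∧ K₁ ⊆ D ∧ Disjoint D K₂ := by
  have hsub : K₁ ⊆ K₂ᶜ := hd.subset_compl_right
  have hx : ∀ x : ℤ → Bool, ∃ V : Set (ℤ → Bool),
      IsClopen V ∧ (x ∈ K₁ → x ∈ V) ∧ V ⊆ K₂ᶜ := by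
    intro x
    by_cases hxK : x ∈ K₁
    · obtain ⟨V, hV, hxV, hVU⟩ := compact_exists_isClopen_in_isOpen h2.isOpen_compl (hsub hxK)
      exact ⟨V, hV, fun _ => hxV, hVU⟩
    · exact ⟨∅, isClopen_empty, fun h => absurd h hxK, empty_subset _⟩
  choose V hVc hVm hVs using hx
  obtain ⟨t, ht⟩ := h1.elim_finite_subcover V (fun x => (hVc x).2)
    (fun x hx => mem_iUnion.2 ⟨x, hVm x hx⟩)
  refine ⟨⋃ x ∈ t, V x, ?_, ht, ?_⟩
  · exact (t.finite_toSet).isClopen_biUnion (fun x _ => hVc x)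
  · rw [Set.disjoint_left]
    rintro y hy hyK
    obtain ⟨x, -, hxy⟩ := mem_iUnion₂.1 hy
    exact hVs x hxy hyK

noncomputable def lam (E : Set ℤ) (𝒰 : Ultrafilter (ℤ × ℤ)) (K : Set (ℤ → Bool)) : ℝ≥0 :=
  sInf ((fun C => Real.toNNReal (dl E 𝒰 C)) '' {C : Set (ℤ → Bool) | IsClopen C ∧ K ⊆ C})

lemma lam_le {C K : Set (ℤ → Bool)} (hC : IsClopen C) (hKC : K ⊆ C) :
    lam E 𝒰 K ≤ (dl E 𝒰 C).toNNReal :=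
  csInf_le (OrderBot.bddBelow _) ⟨C, ⟨hC, hKC⟩, rfl⟩

lemma le_lam {K : Set (ℤ → Bool)} {x : ℝ≥0}
    (hx : ∀ C, IsClopen C → K ⊆ C → x ≤ (dl E 𝒰 C).toNNReal) : x ≤ lam E 𝒰 K :=
  le_csInf ⟨_, ⟨univ, ⟨isClopen_univ, subset_univ K⟩, rfl⟩⟩
    (by rintro b ⟨C, ⟨h1, h2⟩, rfl⟩; exact hx C h1 h2)

lemma lam_clopen {C : Set (ℤ → Bool)} (hC : IsClopen C) :
    lam E 𝒰 C = (dl E 𝒰 C).toNNReal :=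
  le_antisymm (lam_le hC subset_rfl)
    (le_lam fun D h1 h2 => Real.toNNReal_le_toNNReal (dl_mono h2))

lemma lam_union_le (K₁ K₂ : Set (ℤ → Bool)) :
    lam E 𝒰 (K₁ ∪ K₂) ≤ lam E 𝒰 K₁ + lam E 𝒰 K₂ := by
  refine le_of_forall_pos_le_add fun ε hε => ?_
  have hne : ∀ K : Set (ℤ → Bool),
      ((fun C => Real.toNNReal (dl E 𝒰 C)) '' {C | IsClopen C ∧ K ⊆ C}).Nonempty :=
    fun K => ⟨_, ⟨univ, ⟨isClopen_univ, subset_univ K⟩, rfl⟩⟩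
  have h₁ : lam E 𝒰 K₁ < lam E 𝒰 K₁ + ε / 2 :=
    lt_add_of_pos_right _ (by positivity)
  have h₂ : lam E 𝒰 K₂ < lam E 𝒰 K₂ + ε / 2 :=
    lt_add_of_pos_right _ (by positivity)
  obtain ⟨b₁, ⟨C₁, ⟨hC₁, hK₁⟩, rfl⟩, hb₁⟩ := exists_lt_of_csInf_lt (hne K₁) h₁
  obtain ⟨b₂, ⟨C₂, ⟨hC₂, hK₂⟩, rfl⟩, hb₂⟩ := exists_lt_of_csInf_lt (hne K₂) h₂
  have hsub : lam E 𝒰 (K₁ ∪ K₂) ≤ (dl E 𝒰 (C₁ ∪ C₂)).toNNReal :=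
    lam_le (hC₁.union hC₂) (union_subset_union hK₁ hK₂)
  have hadd : (dl E 𝒰 (C₁ ∪ C₂)).toNNReal ≤
      (dl E 𝒰 C₁).toNNReal + (dl E 𝒰 C₂).toNNReal :=
    (Real.toNNReal_le_toNNReal (dl_union_le C₁ C₂)).trans Real.toNNReal_add_le
  calc lam E 𝒰 (K₁ ∪ K₂) ≤ (dl E 𝒰 C₁).toNNReal + (dl E 𝒰 C₂).toNNReal := hsub.trans hadd
  _ ≤ (lam E 𝒰 K₁ + ε / 2) + (lam E 𝒰 K₂ + ε / 2) := add_le_add hb₁.le hb₂.le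
  _ = lam E 𝒰 K₁ + lam E 𝒰 K₂ + ε := by
      rw [add_add_add_comm, add_halves]

noncomputable def cont (E : Set ℤ) (𝒰 : Ultrafilter (ℤ × ℤ)) : Content (ℤ → Bool) where
  toFun K := lam E 𝒰 K.1
  mono' K₁ K₂ h := le_lam fun C h1 h2 => (lam_le h1 (h.trans h2)).trans_eq rfl
  sup_le' K₁ K₂ := lam_union_le K₁.1 K₂.1
  sup_disjoint' K₁ K₂ hd hc1 hc2 := by
    refine le_antisymm (lam_union_le K₁.1 K₂.1) ?_
    · refine le_lam fun C hC hKC => ?_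
      obtain ⟨D, hD, hK₁D, hDK₂⟩ := exists_clopen_sep K₁.2 hc2 hd
      have hC₁ : IsClopen (C ∩ D) := hC.inter hD
      have hC₂ : IsClopen (C ∩ Dᶜ) := hC.inter hD.compl
      have hdisj : Disjoint (C ∩ D) (C ∩ Dᶜ) :=
        (disjoint_compl_right.mono inf_le_right inf_le_right)
      have hCeq : C ∩ D ∪ C ∩ Dᶜ = C := inter_union_compl C D
      have hdl : dl E 𝒰 C = dl E 𝒰 (C ∩ D) + dl E 𝒰 (C ∩ Dᶜ) := by
        rw [← hCeq, dl_union_disjoint hdisj]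
        rw [hCeq]
      have h1 : (K₁ : Set (ℤ → Bool)) ⊆ C ∩ D :=
        subset_inter ((subset_union_left).trans hKC) hK₁D
      have h2 : (K₂ : Set (ℤ → Bool)) ⊆ C ∩ Dᶜ :=
        subset_inter ((subset_union_right).trans hKC) (subset_compl_iff_disjoint_left.2 hDK₂)
      calc lam E 𝒰 (K₁ : Set (ℤ → Bool)) + lam E 𝒰 (K₂ : Set (ℤ → Bool))
          ≤ (dl E 𝒰 (C ∩ D)).toNNReal + (dl E 𝒰 (C ∩ Dᶜ)).toNNReal :=
            add_le_add (lam_le hC₁ h1) (lam_le hC₂ h2)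
      _ = (dl E 𝒰 C).toNNReal := by
            rw [hdl, Real.toNNReal_add (dl_nonneg _) (dl_nonneg _)]

noncomputable def mu (E : Set ℤ) (𝒰 : Ultrafilter (ℤ × ℤ)) : Measure (ℤ → Bool) :=
  (cont E 𝒰).measure

variable {E : Set ℤ} {𝒰 : Ultrafilter (ℤ × ℤ)}

lemma mu_clopen {C : Set (ℤ → Bool)} (hC : IsClopen C) :
    mu E 𝒰 C = ENNReal.ofReal (dl E 𝒰 C) := by
  rw [mu, Content.measure_apply _ hC.isOpen.measurableSet]
  have h1 : (cont E 𝒰).outerMeasure C = (cont E 𝒰).innerContent ⟨C, hC.isOpen⟩ :=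
    Content.outerMeasure_opens _ ⟨C, hC.isOpen⟩
  rw [h1, Content.innerContent_of_isCompact _ hC.isClosed.isCompact hC.isOpen]
  show ((lam E 𝒰 C : ℝ≥0) : ℝ≥0∞) = _
  rw [lam_clopen hC]
  rfl

lemma cylinder_isClopen {t : Set (ℤ → Bool)} (ht : t ∈ measurableCylinders (fun _ : ℤ => Bool)) :
    IsClopen t := by
  obtain ⟨s, S, -, rfl⟩ := (mem_measurableCylinders t).1 ht
  exact (isClopen_discrete S).preimage (continuous_pi fun i => continuous_apply _)

lemma borel_eq_clopens :
    (inferInstance : MeasurableSpace (ℤ → Bool)) =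
      MeasurableSpace.generateFrom {C : Set (ℤ → Bool) | IsClopen C} := by
  apply le_antisymm
  · rw [show (inferInstance : MeasurableSpace (ℤ → Bool)) = MeasurableSpace.pi from rfl,
      ← generateFrom_measurableCylinders]
    exact MeasurableSpace.generateFrom_mono fun t ht => cylinder_isClopen ht
  · exact MeasurableSpace.generateFrom_le fun C hC => hC.isOpen.measurableSet

lemma Tsh_measurable (n : ℤ) : Measurable (Tsh n) :=
  measurable_pi_lambda _ fun k => measurable_pi_apply _

lemma Tsh_continuous (n : ℤ) : Continuous (Tsh n) :=
  continuous_pi fun k => continuous_apply _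

lemma mu_univ (h𝒰 : (𝒰 : Filter (ℤ × ℤ)) ≤ Fl) : mu E 𝒰 univ = 1 := by
  rw [mu_clopen isClopen_univ, dl_univ h𝒰]
  simp

lemma mu_fin (h𝒰 : (𝒰 : Filter (ℤ × ℤ)) ≤ Fl) : IsProbabilityMeasure (mu E 𝒰) :=
  ⟨mu_univ h𝒰⟩

lemma mu_preserving (h𝒰 : (𝒰 : Filter (ℤ × ℤ)) ≤ Fl) (n : ℤ) :
    MeasurePreserving (Tsh n) (mu E 𝒰) (mu E 𝒰) := by
  refine ⟨Tsh_measurable n, ?_⟩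
  haveI := mu_fin (E := E) h𝒰
  symm
  refine ext_of_generate_finite {C : Set (ℤ → Bool) | IsClopen C} borel_eq_clopens
    (fun C hC D hD _ => hC.inter hD) (fun C hC => ?_) ?_
  · rw [Measure.map_apply (Tsh_measurable n) hC.isOpen.measurableSet,
      mu_clopen (hC.preimage (Tsh_continuous n)), mu_clopen hC, dl_shift h𝒰 n C]
  · rw [Measure.map_apply (Tsh_measurable n) MeasurableSet.univ, preimage_univ]

def Cyl (n : ℤ) : Set (ℤ → Bool) := {x | x n = true}

lemma Cyl_clopen (n : ℤ) : IsClopen (Cyl n) :=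
  (isClopen_discrete {true}).preimage (continuous_apply n)

lemma yseq_mem (m n : ℤ) : yseq E m n = true ↔ m + n ∈ E := by simp [yseq]

lemma Tsh_image (n : ℤ) : Tsh n '' Cyl 0 = Cyl n := by
  ext x
  constructor
  · rintro ⟨a, ha, rfl⟩
    show a (n - n) = true
    rw [sub_self]
    exact ha
  · intro hx
    refine ⟨Tsh (-n) x, ?_, ?_⟩
    · show x (0 - -n) = true
      rw [show (0:ℤ) - -n = n by ring]
      exact hx
    · funext k
      show x (k - n - -n) = x k
      rw [show k - n - -n = k by ring]

/-- The Furstenberg correspondence principle: if `E ⊆ ℤ` has positive upper Banach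
density, there are a probability space `(Y, 𝔅, μ)` with an invertible measure-preserving
transformation (given as a measure-preserving `ℤ`-action `T`) and a measurable set `A`
with `μ A > 0` such that for every finite `U ⊆ ℤ`, the upper Banach density of
`⋂_{n ∈ U} (E - n)` is at least `μ (⋂_{n ∈ U} Tⁿ A)`. -/
theorem furstenberg_correspondence (E : Set ℤ) (hE : 0 < upperBanachDensity E) :
    ∃ (Y : Type) (mY : MeasurableSpace Y) (μ : Measure Y) (T : ℤ → Y → Y) (A : Set Y),
      IsProbabilityMeasure μ ∧
      (∀ n : ℤ, MeasurePreserving (T n) μ μ) ∧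
      T 0 = id ∧
      (∀ m n : ℤ, T (m + n) = T m ∘ T n) ∧
      MeasurableSet[mY] A ∧
      0 < μ A ∧
      ∀ U : Finset ℤ,
        μ (⋂ n ∈ U, T n '' A) ≤
          ENNReal.ofReal (upperBanachDensity (⋂ n ∈ U, {m : ℤ | m + n ∈ E})) := by
  have hco : IsCoboundedUnder (· ≤ ·) Fl (rat (fun m => m ∈ E)) :=
    (isBoundedUnder_of ⟨0, fun p => rat_nonneg _ p⟩ :
      IsBoundedUnder (· ≥ ·) Fl (rat (fun m => m ∈ E))).isCoboundedUnder_le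
  have hfreq : ∃ᶠ p in Fl, upperBanachDensity E / 2 < rat (fun m => m ∈ E) p := by
    refine frequently_lt_of_lt_limsup hco ?_
    rw [← ubd_eq E]
    exact half_lt_self hE
  haveI hne : (Fl ⊓ 𝓟 {p | upperBanachDensity E / 2 < rat (fun m => m ∈ E) p}).NeBot :=
    frequently_iff_neBot.1 hfreq
  obtain ⟨𝒰, h𝒰le⟩ := Filter.exists_ultrafilter_le
    (Fl ⊓ 𝓟 {p | upperBanachDensity E / 2 < rat (fun m => m ∈ E) p})
  have h𝒰 : (𝒰 : Filter (ℤ × ℤ)) ≤ Fl := h𝒰le.trans inf_le_left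
  have hmem : {p : ℤ × ℤ | upperBanachDensity E / 2 < rat (fun m => m ∈ E) p} ∈ 𝒰 :=
    le_principal_iff.1 (h𝒰le.trans inf_le_right)
  refine ⟨ℤ → Bool, inferInstance, mu E 𝒰, Tsh, Cyl 0, mu_fin h𝒰, mu_preserving h𝒰,
    ?_, ?_, ?_, ?_, ?_⟩
  · funext x
    funext k
    show x (k - 0) = x k
    rw [sub_zero]
  · intro m n
    funext x
    funext k
    show x (k - (m + n)) = x (k - m - n)
    rw [show k - (m + n) = k - m - n by ring]
  · exact (Cyl_clopen 0).isOpen.measurableSet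
  · rw [mu_clopen (Cyl_clopen 0)]
    have hrS : rS E (Cyl 0) = rat (fun m => m ∈ E) := by
      unfold rS
      have hq : (fun m => yseq E m ∈ Cyl 0) = (fun m => m ∈ E) :=
        funext fun m => propext (by
          rw [show (yseq E m ∈ Cyl 0) = (yseq E m 0 = true) from rfl, yseq_mem, add_zero])
      rw [hq]
    have hdl : upperBanachDensity E / 2 ≤ dl E 𝒰 (Cyl 0) := by
      refine ge_of_tendsto (dl_tendsto E 𝒰 (Cyl 0)) ?_
      filter_upwards [hmem] with p hp
      rw [hrS]
      exact hp.le
    exact ENNReal.ofReal_pos.2 (lt_of_lt_of_le (half_pos hE) hdl)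
  · intro U
    have him : ⋂ n ∈ U, Tsh n '' Cyl 0 = ⋂ n ∈ U, Cyl n := by
      apply iInter₂_congr
      intro n _
      exact Tsh_image n
    have hC : IsClopen (⋂ n ∈ U, Cyl n) := by
      have h1 := U.finite_toSet.isClopen_biInter (f := Cyl) (fun n _ => Cyl_clopen n)
      have h2 : (⋂ n ∈ (↑U : Set ℤ), Cyl n) = ⋂ n ∈ U, Cyl n := by simp
      rwa [h2] at h1
    rw [him, mu_clopen hC]
    apply ENNReal.ofReal_le_ofReal
    refine limsup_le_ubd E 𝒰 h𝒰 (q := fun m => yseq E m ∈ ⋂ n ∈ U, Cyl n)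
      (S := ⋂ n ∈ U, {m : ℤ | m + n ∈ E}) ?_ (dl_tendsto E 𝒰 (⋂ n ∈ U, Cyl n))
    intro m
    simp only [mem_iInter, Cyl, mem_setOf_eq, yseq_mem]
end

section
/- Let f : ℤ → [−1, 1] be a function. Then there exist a dynamical system (Y, 𝔅, μ, T) (a probability measure space with an invertible measurable measure-preserving transformation T) and a function F ∈ L^∞(Y) with |F| ≤ 1 almost everywhere such that for every finite set of integers U, liminf_{N→∞} (1/N) Σ_{n=1}^{N} ∏_{k∈U} f(n + k) ≤ ∫ ∏_{k∈U} F ∘ T^k dμ ≤ limsup_{N→∞} (1/N) Σ_{n=1}^{N} ∏_{k∈U} f(n + k). -/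
open Filter MeasureTheory
open scoped Classical

open Filter MeasureTheory TopologicalSpace
open scoped Classical Topology ENNReal NNReal

namespace FFC
noncomputable section




abbrev Y : Type := ℤ → Set.Icc (-1:ℝ) 1

example : CompactSpace Y := inferInstance
example : T2Space Y := inferInstance
example : BorelSpace Y := inferInstance
example : SecondCountableTopology Y := inferInstance

def T (n : ℤ) (y : Y) : Y := fun m => y (m + n)

lemma continuous_T (n : ℤ) : Continuous (T n) :=
  continuous_pi fun m => continuous_apply (m + n)

lemma T_zero : T 0 = id := by funext y m; simp [T]

lemma T_add (m n : ℤ) : T (m + n) = T m ∘ T n := by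
  funext y j; simp [T, add_assoc]

def Thomeo (n : ℤ) : Y ≃ₜ Y where
  toFun := T n
  invFun := T (-n)
  left_inv y := by
    have : T (-n) (T n y) = (T (-n) ∘ T n) y := rfl
    rw [this, ← T_add, neg_add_cancel, T_zero, id]
  right_inv y := by
    have : T n (T (-n) y) = (T n ∘ T (-n)) y := rfl
    rw [this, ← T_add, add_neg_cancel, T_zero, id]
  continuous_toFun := continuous_T n
  continuous_invFun := continuous_T (-n)

def F (y : Y) : ℝ := (y 0 : ℝ)

lemma continuous_F : Continuous F := continuous_subtype_val.comp (continuous_apply 0)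

/-- the fixed free ultrafilter on ℕ -/
def UF : Ultrafilter ℕ := @Filter.hyperfilter ℕ _

lemma UF_le_atTop : (UF : Filter ℕ) ≤ atTop := by
  simpa [UF] using Filter.hyperfilter_le_cofinite.trans_eq Nat.cofinite_eq_atTop

lemma exists_ulim {u : ℕ → ℝ} {a b : ℝ} (h : ∀ N, u N ∈ Set.Icc a b) :
    ∃ ℓ, Tendsto u (UF : Filter ℕ) (𝓝 ℓ) := by
  obtain ⟨ℓ, -, hℓ⟩ := (isCompact_Icc (a := a) (b := b)).ultrafilter_le_nhds (UF.map u)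
    (by rw [Ultrafilter.coe_map, le_principal_iff, mem_map]
        exact Filter.Eventually.of_forall h)
  exact ⟨ℓ, by rwa [Ultrafilter.coe_map] at hℓ⟩

def ulim (u : ℕ → ℝ) : ℝ :=
  if h : ∃ ℓ, Tendsto u (UF : Filter ℕ) (𝓝 ℓ) then h.choose else 0

lemma tendsto_ulim {u : ℕ → ℝ} (h : ∃ ℓ, Tendsto u (UF : Filter ℕ) (𝓝 ℓ)) :
    Tendsto u (UF : Filter ℕ) (𝓝 (ulim u)) := by
  rw [ulim, dif_pos h]; exact h.choose_spec

lemma ulim_eq {u : ℕ → ℝ} {ℓ : ℝ} (h : Tendsto u (UF : Filter ℕ) (𝓝 ℓ)) : ulim u = ℓ :=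
  tendsto_nhds_unique (tendsto_ulim ⟨ℓ, h⟩) h



variable (x : Y)

/-- Cesàro orbit measures -/
def nu (N : ℕ) : Measure Y :=
  ((N : ℝ≥0∞))⁻¹ • ∑ m ∈ Finset.Icc (1:ℤ) (N:ℤ), Measure.dirac (T m x)

lemma nu_apply {s : Set Y} (hs : MeasurableSet s) (N : ℕ) :
    nu x N s = (N : ℝ≥0∞)⁻¹ *
      ((Finset.Icc (1:ℤ) (N:ℤ)).filter (fun m => T m x ∈ s)).card := by
  rw [nu, Measure.smul_apply, Measure.finset_sum_apply, smul_eq_mul]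
  congr 1
  rw [Finset.sum_congr rfl (fun m _ => Measure.dirac_apply' _ hs)]
  simp only [Set.indicator_apply, Pi.one_apply]
  rw [Finset.sum_boole]

lemma nu_univ {N : ℕ} (hN : 1 ≤ N) : nu x N Set.univ = 1 := by
  rw [nu_apply x MeasurableSet.univ]
  simp only [Set.mem_univ, Finset.filter_true]
  rw [Int.card_Icc]
  have : ((N:ℤ) + 1 - 1).toNat = N := by omega
  rw [this]
  rw [ENNReal.inv_mul_cancel (by exact_mod_cast (Nat.pos_of_ne_zero (by omega)).ne') (by simp)]

lemma nu_zero : nu x 0 = 0 := by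
  simp [nu]

theorem nu_prob {N : ℕ} (hN : 1 ≤ N) : IsProbabilityMeasure (nu x N) :=
  ⟨nu_univ x hN⟩

lemma nu_le_one (N : ℕ) (s : Set Y) : nu x N s ≤ 1 := by
  rcases Nat.eq_zero_or_pos N with h | h
  · simp [h, nu_zero]
  · haveI := nu_prob x h
    exact prob_le_one

/-- real-valued weight -/
def wt (s : Set Y) (N : ℕ) : ℝ := (nu x N s).toReal

lemma wt_nonneg (s : Set Y) (N : ℕ) : 0 ≤ wt x s N := ENNReal.toReal_nonneg

lemma wt_le_one (s : Set Y) (N : ℕ) : wt x s N ≤ 1 := by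
  have := ENNReal.toReal_mono ENNReal.one_ne_top (nu_le_one x N s)
  simpa [wt] using this

lemma wt_mem (s : Set Y) (N : ℕ) : wt x s N ∈ Set.Icc (0:ℝ) 1 :=
  ⟨wt_nonneg x s N, wt_le_one x s N⟩

lemma wt_mono {s t : Set Y} (h : s ⊆ t) (N : ℕ) : wt x s N ≤ wt x t N :=
  ENNReal.toReal_mono (ne_top_of_le_ne_top ENNReal.one_ne_top (nu_le_one x N t)) (measure_mono h)

lemma wt_union {s t : Set Y} (h : Disjoint s t) (ht : MeasurableSet t) (N : ℕ) :
    wt x (s ∪ t) N = wt x s N + wt x t N := by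
  rw [wt, wt, wt, measure_union h ht, ENNReal.toReal_add
    (ne_top_of_le_ne_top ENNReal.one_ne_top (nu_le_one x N s))
    (ne_top_of_le_ne_top ENNReal.one_ne_top (nu_le_one x N t))]

lemma wt_union_le (s t : Set Y) (N : ℕ) : wt x (s ∪ t) N ≤ wt x s N + wt x t N := by
  rw [wt, wt, wt, ← ENNReal.toReal_add
    (ne_top_of_le_ne_top ENNReal.one_ne_top (nu_le_one x N s))
    (ne_top_of_le_ne_top ENNReal.one_ne_top (nu_le_one x N t))]
  exact ENNReal.toReal_mono (by
    exact ENNReal.add_ne_top.mpr ⟨ne_top_of_le_ne_top ENNReal.one_ne_top (nu_le_one x N s),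
      ne_top_of_le_ne_top ENNReal.one_ne_top (nu_le_one x N t)⟩) (measure_union_le s t)

lemma wt_compl {s : Set Y} (hs : MeasurableSet s) {N : ℕ} (hN : 1 ≤ N) :
    wt x sᶜ N = 1 - wt x s N := by
  have := wt_union x (disjoint_compl_right (a := s)) hs.compl N
  rw [Set.union_compl_self] at this
  have huniv : wt x Set.univ N = 1 := by rw [wt, nu_univ x hN, ENNReal.toReal_one]
  linarith

lemma wt_wind {s : Set Y} (hs : MeasurableSet s) {N : ℕ} (hN : 1 ≤ N) :
    wt x s N = (((Finset.Icc (1:ℤ) (N:ℤ)).filter (fun m => T m x ∈ s)).card : ℝ) / N := by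
  rw [wt, nu_apply x hs, ENNReal.toReal_mul, ENNReal.toReal_inv, ENNReal.toReal_natCast,
    ENNReal.toReal_natCast, inv_mul_eq_div]




lemma card_filter_shift (P : ℤ → Prop) (a b c : ℤ) :
    ((Finset.Icc a b).filter (fun m => P (m + c))).card
      = ((Finset.Icc (a+c) (b+c)).filter P).card := by
  apply Finset.card_bij' (fun m _ => m + c) (fun m _ => m - c)
  · intro m hm
    simp only [Finset.mem_filter, Finset.mem_Icc] at *
    exact ⟨by omega, hm.2⟩
  · intro m hm
    simp only [Finset.mem_filter, Finset.mem_Icc] at *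
    refine ⟨by omega, by simpa using hm.2⟩
  · intros; omega
  · intros; omega

lemma card_filter_window (P : ℤ → Prop) (a b c : ℤ) :
    ((Finset.Icc a b).filter P).card ≤ ((Finset.Icc (a+c) (b+c)).filter P).card + c.natAbs := by
  have hsub : (Finset.Icc a b).filter P ⊆ ((Finset.Icc (a+c) (b+c)).filter P)
      ∪ (Finset.Icc a (a+c-1) ∪ Finset.Icc (b+c+1) b) := by
    intro m hm
    simp only [Finset.mem_filter, Finset.mem_Icc] at hm
    simp only [Finset.mem_union, Finset.mem_filter, Finset.mem_Icc]
    by_cases h : a + c ≤ m ∧ m ≤ b + c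
    · exact Or.inl ⟨h, hm.2⟩
    · exact Or.inr (by omega)
  calc ((Finset.Icc a b).filter P).card
      ≤ _ := Finset.card_le_card hsub
    _ ≤ ((Finset.Icc (a+c) (b+c)).filter P).card
          + ((Finset.Icc a (a+c-1) ∪ Finset.Icc (b+c+1) b).card) := Finset.card_union_le _ _
    _ ≤ _ := by
        have h2 : (Finset.Icc a (a+c-1) ∪ Finset.Icc (b+c+1) b).card
            ≤ (Finset.Icc a (a+c-1)).card + (Finset.Icc (b+c+1) b).card :=
          Finset.card_union_le _ _
        have e1 : (Finset.Icc a (a+c-1)).card = (a+c-1+1-a).toNat := Int.card_Icc _ _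
        have e2 : (Finset.Icc (b+c+1) b).card = (b+1-(b+c+1)).toNat := Int.card_Icc _ _
        omega


variable (x : Y)

lemma exists_ulim_wt (s : Set Y) : ∃ ℓ, Tendsto (wt x s) (UF : Filter ℕ) (𝓝 ℓ) :=
  exists_ulim (fun N => wt_mem x s N)

lemma ulim_wt_nonneg (s : Set Y) : 0 ≤ ulim (wt x s) :=
  ge_of_tendsto (tendsto_ulim (exists_ulim_wt x s)) (Eventually.of_forall (wt_nonneg x s))

lemma ulim_wt_mono {s t : Set Y} (h : s ⊆ t) : ulim (wt x s) ≤ ulim (wt x t) :=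
  le_of_tendsto_of_tendsto' (tendsto_ulim (exists_ulim_wt x s))
    (tendsto_ulim (exists_ulim_wt x t)) (fun N => wt_mono x h N)

/-- the content obtained as ultrafilter limit of the Cesàro orbit measures -/
def con : Content Y where
  toFun K := (ulim (wt x K)).toNNReal
  mono' K₁ K₂ h := Real.toNNReal_mono (ulim_wt_mono x h)
  sup_disjoint' K₁ K₂ hd h₁ h₂ := by
    have hadd : Tendsto (fun N => wt x (↑K₁ ∪ ↑K₂) N) (UF : Filter ℕ)
        (𝓝 (ulim (wt x ↑K₁) + ulim (wt x ↑K₂))) := by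
      have := (tendsto_ulim (exists_ulim_wt x ↑K₁)).add (tendsto_ulim (exists_ulim_wt x ↑K₂))
      exact Tendsto.congr (fun N => (wt_union x hd h₂.measurableSet N).symm) this
    show (ulim (wt x ((K₁ ⊔ K₂ : Compacts Y) : Set Y))).toNNReal = _
    rw [Compacts.coe_sup, ulim_eq hadd,
      Real.toNNReal_add (ulim_wt_nonneg x _) (ulim_wt_nonneg x _)]
  sup_le' K₁ K₂ := by
    have hle : ulim (wt x (↑K₁ ∪ ↑K₂)) ≤ ulim (wt x ↑K₁) + ulim (wt x ↑K₂) := by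
      refine le_of_tendsto_of_tendsto' (tendsto_ulim (exists_ulim_wt x _))
        ((tendsto_ulim (exists_ulim_wt x ↑K₁)).add (tendsto_ulim (exists_ulim_wt x ↑K₂)))
        (fun N => wt_union_le x _ _ N)
    show (ulim (wt x ((K₁ ⊔ K₂ : Compacts Y) : Set Y))).toNNReal ≤ _
    rw [Compacts.coe_sup]
    calc (ulim (wt x (↑K₁ ∪ ↑K₂))).toNNReal
        ≤ (ulim (wt x ↑K₁) + ulim (wt x ↑K₂)).toNNReal := Real.toNNReal_mono hle
      _ ≤ _ := Real.toNNReal_add_le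

/-- the invariant measure -/
def mu : Measure Y := (con x).measure

lemma ulim_wt_univ : ulim (wt x Set.univ) = 1 := by
  apply ulim_eq
  apply Tendsto.congr' _ (tendsto_const_nhds (x := (1:ℝ)))
  filter_upwards [UF_le_atTop (eventually_ge_atTop 1)] with N hN
  rw [wt, nu_univ x hN, ENNReal.toReal_one]

lemma con_univ : (con x) ⟨Set.univ, isCompact_univ⟩ = 1 := by
  show ((Real.toNNReal (ulim (wt x Set.univ)) : ℝ≥0) : ℝ≥0∞) = 1
  rw [ulim_wt_univ x]
  simp

instance mu_prob : IsProbabilityMeasure (mu x) := by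
  constructor
  rw [mu, (con x).measure_apply MeasurableSet.univ,
    (con x).outerMeasure_of_isOpen Set.univ isOpen_univ]
  have := (con x).innerContent_of_isCompact isCompact_univ isOpen_univ
  rw [show (⟨Set.univ, isOpen_univ⟩ : Opens Y) = ⟨Set.univ, isOpen_univ⟩ from rfl] at this
  rw [this, con_univ x]

lemma T_neg_T (n : ℤ) (y : Y) : T (-n) (T n y) = y := (Thomeo n).left_inv y

lemma mem_image_T {n : ℤ} {K : Set Y} {y : Y} : y ∈ T n '' K ↔ T (-n) y ∈ K := by
  constructor
  · rintro ⟨z, hz, rfl⟩; rwa [T_neg_T]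
  · intro h; exact ⟨T (-n) y, h, (Thomeo n).right_inv y⟩

lemma wt_image (n : ℤ) {K : Set Y} (hK : MeasurableSet (T n '' K)) {N : ℕ} (hN : 1 ≤ N) :
    wt x (T n '' K) N
      = (((Finset.Icc (1 + -n) ((N:ℤ) + -n)).filter (fun m => T m x ∈ K)).card : ℝ) / N := by
  rw [wt_wind x hK hN]
  have hmem : ∀ m : ℤ, (T m x ∈ T n '' K) ↔ (T (m + -n) x ∈ K) := by
    intro m
    rw [mem_image_T]
    have : T (-n) (T m x) = T (m + -n) x := by
      rw [show T (-n) (T m x) = (T (-n) ∘ T m) x from rfl, ← T_add, add_comm]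
    rw [this]
  have : (Finset.Icc (1:ℤ) (N:ℤ)).filter (fun m => T m x ∈ T n '' K)
      = (Finset.Icc (1:ℤ) (N:ℤ)).filter (fun m => T (m + -n) x ∈ K) := by
    apply Finset.filter_congr; intro m _; simp [hmem m]
  rw [this, card_filter_shift (fun m => T m x ∈ K) 1 (N:ℤ) (-n)]

lemma abs_wt_diff_le (n : ℤ) {K : Set Y} (hK : MeasurableSet K)
    (hK' : MeasurableSet (T n '' K)) {N : ℕ} (hN : 1 ≤ N) :
    |wt x (T n '' K) N - wt x K N| ≤ (n.natAbs : ℝ) / N := by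
  rw [wt_image x n hK' hN, wt_wind x hK hN]
  set cA := ((Finset.Icc (1 + -n) ((N:ℤ) + -n)).filter (fun m => T m x ∈ K)).card with hcA
  set cB := ((Finset.Icc (1:ℤ) (N:ℤ)).filter (fun m => T m x ∈ K)).card with hcB
  have h1 : cA ≤ cB + n.natAbs := by
    have := card_filter_window (fun m => T m x ∈ K) (1 + -n) ((N:ℤ) + -n) n
    simpa [add_assoc] using this
  have h2 : cB ≤ cA + n.natAbs := by
    have := card_filter_window (fun m => T m x ∈ K) 1 (N:ℤ) (-n)
    simpa using this
  have hNpos : (0:ℝ) < N := by exact_mod_cast hN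
  rw [div_sub_div_same, abs_div, abs_of_pos hNpos, div_le_div_iff_of_pos_right hNpos]
  rw [abs_le]
  constructor
  · have : (cB : ℝ) ≤ (cA : ℝ) + (n.natAbs : ℝ) := by exact_mod_cast h2
    linarith
  · have : (cA : ℝ) ≤ (cB : ℝ) + (n.natAbs : ℝ) := by exact_mod_cast h1
    linarith

lemma ulim_wt_image (n : ℤ) {K : Set Y} (hK : MeasurableSet K)
    (hK' : MeasurableSet (T n '' K)) :
    ulim (wt x (T n '' K)) = ulim (wt x K) := by
  apply ulim_eq
  have hdiff : Tendsto (fun N => wt x (T n '' K) N - wt x K N) atTop (𝓝 0) := by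
    apply squeeze_zero_norm' (a := fun N : ℕ => (n.natAbs : ℝ) / N)
    · filter_upwards [eventually_ge_atTop 1] with N hN
      exact abs_wt_diff_le x n hK hK' hN
    · exact tendsto_const_div_atTop_nhds_zero_nat _
  have := (tendsto_ulim (exists_ulim_wt x K)).add (hdiff.mono_left UF_le_atTop)
  rw [add_zero] at this
  apply this.congr
  intro N; ring

lemma con_map (n : ℤ) (K : Compacts Y) :
    con x (K.map (Thomeo n) (Thomeo n).continuous) = con x K := by
  have hc : (↑(K.map (Thomeo n) (Thomeo n).continuous) : Set Y) = T n '' ↑K := rfl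
  show ((Real.toNNReal (ulim (wt x ↑(K.map (Thomeo n) (Thomeo n).continuous))) : ℝ≥0) : ℝ≥0∞)
      = ((Real.toNNReal (ulim (wt x ↑K)) : ℝ≥0) : ℝ≥0∞)
  rw [hc, ulim_wt_image x n K.isCompact.isClosed.measurableSet
    (((K.map (Thomeo n) (Thomeo n).continuous).isCompact.isClosed.measurableSet))]

lemma mu_preserving (n : ℤ) : MeasurePreserving (T n) (mu x) (mu x) := by
  refine ⟨(continuous_T n).measurable, ?_⟩
  apply Measure.ext; intro A hA
  rw [Measure.map_apply (continuous_T n).measurable hA]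
  rw [mu, (con x).measure_apply (hA.preimage (continuous_T n).measurable),
    (con x).measure_apply hA]
  exact (con x).outerMeasure_preimage (Thomeo n) (fun K => con_map x n K) A



lemma count_le {m : ℕ} {t : ℝ} (ht : 0 ≤ t) :
    ((((Finset.Icc 1 m).filter (fun i : ℕ => (i:ℝ) ≤ m * t)).card : ℝ)) ≤ m * t := by
  have hsub : (Finset.Icc 1 m).filter (fun i : ℕ => (i:ℝ) ≤ m * t)
      ⊆ Finset.Icc 1 ⌊(m:ℝ) * t⌋₊ := by
    intro i hi
    simp only [Finset.mem_filter, Finset.mem_Icc] at *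
    exact ⟨hi.1.1, Nat.le_floor hi.2⟩
  calc ((((Finset.Icc 1 m).filter (fun i : ℕ => (i:ℝ) ≤ m * t)).card : ℝ))
      ≤ ((Finset.Icc 1 ⌊(m:ℝ) * t⌋₊).card : ℝ) := by
        exact_mod_cast Finset.card_le_card hsub
    _ ≤ (⌊(m:ℝ) * t⌋₊ : ℝ) := by
        rw [Nat.card_Icc]; exact_mod_cast Nat.le_refl _ |>.trans (by omega)
    _ ≤ m * t := Nat.floor_le (by positivity)

lemma count_lt_le {m : ℕ} {t : ℝ} (ht : 0 ≤ t) :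
    ((((Finset.Icc 1 m).filter (fun i : ℕ => (i:ℝ) < m * t)).card : ℝ)) ≤ m * t := by
  refine le_trans ?_ (count_le (m := m) ht)
  have : (Finset.Icc 1 m).filter (fun i : ℕ => (i:ℝ) < m * t)
      ⊆ (Finset.Icc 1 m).filter (fun i : ℕ => (i:ℝ) ≤ m * t) :=
    Finset.monotone_filter_right _ (fun i _ hi => le_of_lt hi)
  exact_mod_cast Finset.card_le_card this

lemma le_count {m : ℕ} {t : ℝ} (ht : t ∈ Set.Icc (0:ℝ) 1) :
    (m:ℝ) * t ≤ 1 + (((Finset.Icc 1 m).filter (fun i : ℕ => (i:ℝ) < m * t)).card : ℝ) := by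
  set c := ⌈(m:ℝ) * t⌉₊ with hc
  rcases Nat.eq_zero_or_pos c with h0 | hpos
  · have : (m:ℝ) * t ≤ 0 := by
      have := Nat.ceil_eq_zero.mp h0
      exact this
    have hcard : (0:ℝ) ≤ (((Finset.Icc 1 m).filter (fun i : ℕ => (i:ℝ) < m * t)).card : ℝ) := by
      positivity
    linarith
  · have hcm : c ≤ m := by
      rw [hc, Nat.ceil_le]
      calc (m:ℝ) * t ≤ m * 1 := by
            exact mul_le_mul_of_nonneg_left ht.2 (by positivity)
        _ = m := by ring
    have hsub : Finset.Icc 1 (c - 1) ⊆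
        (Finset.Icc 1 m).filter (fun i : ℕ => (i:ℝ) < m * t) := by
      intro i hi
      simp only [Finset.mem_Icc] at hi
      simp only [Finset.mem_filter, Finset.mem_Icc]
      refine ⟨⟨hi.1, by omega⟩, ?_⟩
      rw [← Nat.lt_ceil]
      omega
    have hcard : ((c:ℝ) - 1) ≤ (((Finset.Icc 1 m).filter (fun i : ℕ => (i:ℝ) < m * t)).card : ℝ) := by
      have := Finset.card_le_card hsub
      rw [Nat.card_Icc] at this
      have h2 : c - 1 + 1 - 1 = c - 1 := by omega
      rw [h2] at this
      have : ((c - 1 : ℕ) : ℝ) ≤ _ := Nat.cast_le.mpr this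
      rw [Nat.cast_sub hpos] at this
      exact_mod_cast this
    have hceil : (m:ℝ) * t ≤ c := Nat.le_ceil _
    linarith

lemma le_count_le {m : ℕ} {t : ℝ} (ht : t ∈ Set.Icc (0:ℝ) 1) :
    (m:ℝ) * t ≤ 1 + (((Finset.Icc 1 m).filter (fun i : ℕ => (i:ℝ) ≤ m * t)).card : ℝ) := by
  refine (le_count ht).trans ?_
  have : ((((Finset.Icc 1 m).filter (fun i : ℕ => (i:ℝ) < m * t)).card : ℝ))
      ≤ (((Finset.Icc 1 m).filter (fun i : ℕ => (i:ℝ) ≤ m * t)).card : ℝ) := by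
    exact_mod_cast Finset.card_le_card
      (Finset.monotone_filter_right _ (fun i _ hi => le_of_lt hi))
  linarith

variable {α : Type} [MeasurableSpace α] (ν : Measure α) [IsProbabilityMeasure ν]
  (g : α → ℝ) (s : ℕ → Set α) (m : ℕ)

lemma integrable_count (hs : ∀ i, MeasurableSet (s i)) :
    Integrable (fun y => (((Finset.Icc 1 m).filter (fun i => y ∈ s i)).card : ℝ)) ν := by
  have h1 : Integrable (fun y => ∑ i ∈ Finset.Icc 1 m,
      Set.indicator (s i) (fun _ => (1:ℝ)) y) ν :=
    integrable_finset_sum _ (fun i _ => (integrable_const (1:ℝ)).indicator (hs i))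
  apply h1.congr
  filter_upwards with y
  simp only [Set.indicator_apply, Finset.sum_boole]

lemma sum_meas_eq_integral (hs : ∀ i, MeasurableSet (s i)) :
    ∑ i ∈ Finset.Icc 1 m, (ν (s i)).toReal
      = ∫ y, (((Finset.Icc 1 m).filter (fun i => y ∈ s i)).card : ℝ) ∂ν := by
  have h : ∀ i ∈ Finset.Icc 1 m,
      (ν (s i)).toReal = ∫ y, Set.indicator (s i) (fun _ => (1:ℝ)) y ∂ν := by
    intro i _
    rw [integral_indicator_const (1:ℝ) (hs i)]
    simp
    rfl
  rw [Finset.sum_congr rfl h,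
    ← integral_finset_sum _ (fun i _ => (integrable_const (1:ℝ)).indicator (hs i))]
  congr 1; funext y
  simp only [Set.indicator_apply, Finset.sum_boole]

lemma sum_meas_le (hs : ∀ i, MeasurableSet (s i)) (hgi : Integrable g ν)
    (h : ∀ y, (((Finset.Icc 1 m).filter (fun i => y ∈ s i)).card : ℝ) ≤ m * g y) :
    ∑ i ∈ Finset.Icc 1 m, (ν (s i)).toReal ≤ m * ∫ y, g y ∂ν := by
  rw [sum_meas_eq_integral ν s m hs, ← integral_const_mul]
  exact integral_mono (integrable_count ν s m hs) (hgi.const_mul _) h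

lemma le_sum_meas (hs : ∀ i, MeasurableSet (s i)) (hgi : Integrable g ν)
    (h : ∀ y, (m:ℝ) * g y ≤ 1 + (((Finset.Icc 1 m).filter (fun i => y ∈ s i)).card : ℝ)) :
    (m:ℝ) * ∫ y, g y ∂ν ≤ 1 + ∑ i ∈ Finset.Icc 1 m, (ν (s i)).toReal := by
  rw [sum_meas_eq_integral ν s m hs, ← integral_const_mul]
  have : (1:ℝ) + ∫ y, (((Finset.Icc 1 m).filter (fun i => y ∈ s i)).card : ℝ) ∂ν
      = ∫ y, 1 + (((Finset.Icc 1 m).filter (fun i => y ∈ s i)).card : ℝ) ∂ν := by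
    rw [integral_add (integrable_const 1) (integrable_count ν s m hs)]
    simp
  rw [this]
  exact integral_mono (hgi.const_mul _) ((integrable_const 1).add (integrable_count ν s m hs)) h


lemma cont_integrable {ν : Measure Y} [IsFiniteMeasure ν] {g : Y → ℝ} (hg : Continuous g) :
    Integrable g ν :=
  hg.integrable_of_hasCompactSupport
    (IsCompact.of_isClosed_subset isCompact_univ (isClosed_tsupport g) (Set.subset_univ _))

lemma mu_open_le {V : Set Y} (hV : IsOpen V) : ((mu x) V).toReal ≤ ulim (wt x V) := by
  have h1 : (mu x) V ≤ ENNReal.ofReal (ulim (wt x V)) := by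
    rw [mu, (con x).measure_apply hV.measurableSet, (con x).outerMeasure_of_isOpen V hV]
    rw [Content.innerContent]
    refine iSup₂_le fun K hK => ?_
    have : con x K = ENNReal.ofReal (ulim (wt x ↑K)) := rfl
    rw [this]
    exact ENNReal.ofReal_le_ofReal (ulim_wt_mono x hK)
  calc ((mu x) V).toReal ≤ (ENNReal.ofReal (ulim (wt x V))).toReal :=
        ENNReal.toReal_mono ENNReal.ofReal_ne_top h1
    _ = ulim (wt x V) := ENNReal.toReal_ofReal (ulim_wt_nonneg x V)

lemma ulim_wt_compl {s : Set Y} (hs : MeasurableSet s) :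
    ulim (wt x sᶜ) = 1 - ulim (wt x s) := by
  apply ulim_eq
  have h := (tendsto_const_nhds (x := (1:ℝ)) (f := (UF : Filter ℕ))).sub
    (tendsto_ulim (exists_ulim_wt x s))
  apply h.congr'
  filter_upwards [UF_le_atTop (eventually_ge_atTop 1)] with N hN
  rw [wt_compl x hs hN]

lemma mu_closed_ge {C : Set Y} (hC : IsClosed C) : ulim (wt x C) ≤ ((mu x) C).toReal := by
  haveI := mu_prob x
  have h1 : ((mu x) Cᶜ).toReal ≤ ulim (wt x Cᶜ) := mu_open_le x hC.isOpen_compl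
  have h2 : ((mu x) C).toReal + ((mu x) Cᶜ).toReal = 1 := by
    have := measure_add_measure_compl (μ := mu x) hC.measurableSet
    rw [measure_univ] at this
    rw [← ENNReal.toReal_add (measure_ne_top _ _) (measure_ne_top _ _), this, ENNReal.toReal_one]
  rw [ulim_wt_compl x hC.measurableSet] at h1
  linarith

lemma integral_nu_def {g : Y → ℝ} (hg : Continuous g) (N : ℕ) :
    ∫ y, g y ∂(nu x N) = (N:ℝ)⁻¹ * ∑ m ∈ Finset.Icc (1:ℤ) (N:ℤ), g (T m x) := by
  rw [nu, integral_smul_measure,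
    integral_finset_sum_measure (fun m _ => cont_integrable hg)]
  rw [ENNReal.toReal_inv, ENNReal.toReal_natCast, smul_eq_mul]
  congr 1
  exact Finset.sum_congr rfl (fun m _ => integral_dirac' _ _ hg.stronglyMeasurable)

lemma integral_nu_mem {g : Y → ℝ} (hg : Continuous g) (hg01 : ∀ y, g y ∈ Set.Icc (0:ℝ) 1)
    (N : ℕ) : ∫ y, g y ∂(nu x N) ∈ Set.Icc (0:ℝ) 1 := by
  rcases Nat.eq_zero_or_pos N with h | h
  · subst h; rw [nu_zero]; simp
  · haveI := nu_prob x h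
    constructor
    · exact integral_nonneg (fun y => (hg01 y).1)
    · calc ∫ y, g y ∂(nu x N) ≤ ∫ _, (1:ℝ) ∂(nu x N) :=
            integral_mono (cont_integrable hg) (integrable_const 1) (fun y => (hg01 y).2)
        _ = 1 := by simp

lemma integral_mu_eq {g : Y → ℝ} (hgc : Continuous g) (hg01 : ∀ y, g y ∈ Set.Icc (0:ℝ) 1) :
    ∫ y, g y ∂(mu x) = ulim (fun N => ∫ y, g y ∂(nu x N)) := by
  haveI := mu_prob x
  set A := ∫ y, g y ∂(mu x) with hA
  set B := ulim (fun N => ∫ y, g y ∂(nu x N)) with hB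
  have hBtend : Tendsto (fun N => ∫ y, g y ∂(nu x N)) (UF : Filter ℕ) (𝓝 B) :=
    tendsto_ulim (exists_ulim (integral_nu_mem x hgc hg01))
  have key : ∀ m : ℕ, 1 ≤ m → (m:ℝ) * A ≤ 1 + m * B ∧ (m:ℝ) * B ≤ 1 + m * A := by
    intro m hm
    have hVopen : ∀ i : ℕ, IsOpen {y : Y | (i:ℝ) < m * g y} :=
      fun i => isOpen_lt continuous_const (continuous_const.mul hgc)
    have hCclosed : ∀ i : ℕ, IsClosed {y : Y | (i:ℝ) ≤ m * g y} :=
      fun i => isClosed_le continuous_const (continuous_const.mul hgc)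
    have hVmeas : ∀ i : ℕ, MeasurableSet {y : Y | (i:ℝ) < m * g y} :=
      fun i => (hVopen i).measurableSet
    have hCmeas : ∀ i : ℕ, MeasurableSet {y : Y | (i:ℝ) ≤ m * g y} :=
      fun i => (hCclosed i).measurableSet
    constructor
    · -- upper bound
      have h1 : (m:ℝ) * A ≤ 1 + ∑ i ∈ Finset.Icc 1 m,
          ((mu x) {y : Y | (i:ℝ) < m * g y}).toReal := by
        refine le_sum_meas (mu x) g _ m hVmeas (cont_integrable hgc) (fun y => ?_)
        exact le_count (hg01 y)
      have h2 : ∑ i ∈ Finset.Icc 1 m, ((mu x) {y : Y | (i:ℝ) < m * g y}).toReal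
          ≤ ∑ i ∈ Finset.Icc 1 m, ulim (wt x {y : Y | (i:ℝ) < m * g y}) :=
        Finset.sum_le_sum (fun i _ => mu_open_le x (hVopen i))
      have h3 : ∑ i ∈ Finset.Icc 1 m, ulim (wt x {y : Y | (i:ℝ) < m * g y}) ≤ m * B := by
        refine le_of_tendsto_of_tendsto
          (tendsto_finset_sum _ (fun i _ => tendsto_ulim (exists_ulim_wt x _)))
          (hBtend.const_mul (m:ℝ)) ?_
        filter_upwards [UF_le_atTop (eventually_ge_atTop 1)] with N hN
        haveI := nu_prob x hN
        refine sum_meas_le (nu x N) g _ m hVmeas (cont_integrable hgc) (fun y => ?_)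
        exact count_lt_le (hg01 y).1
      linarith
    · -- lower bound
      have g1 : ∑ i ∈ Finset.Icc 1 m, ((mu x) {y : Y | (i:ℝ) ≤ m * g y}).toReal ≤ m * A := by
        refine sum_meas_le (mu x) g _ m hCmeas (cont_integrable hgc) (fun y => ?_)
        exact count_le (hg01 y).1
      have g2 : ∑ i ∈ Finset.Icc 1 m, ulim (wt x {y : Y | (i:ℝ) ≤ m * g y})
          ≤ ∑ i ∈ Finset.Icc 1 m, ((mu x) {y : Y | (i:ℝ) ≤ m * g y}).toReal :=
        Finset.sum_le_sum (fun i _ => mu_closed_ge x (hCclosed i))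
      have g3 : (m:ℝ) * B ≤ 1 + ∑ i ∈ Finset.Icc 1 m,
          ulim (wt x {y : Y | (i:ℝ) ≤ m * g y}) := by
        refine le_of_tendsto_of_tendsto (hBtend.const_mul (m:ℝ))
          (tendsto_const_nhds.add
            (tendsto_finset_sum _ (fun i _ => tendsto_ulim (exists_ulim_wt x _)))) ?_
        filter_upwards [UF_le_atTop (eventually_ge_atTop 1)] with N hN
        haveI := nu_prob x hN
        refine le_sum_meas (nu x N) g _ m hCmeas (cont_integrable hgc) (fun y => ?_)
        exact le_count_le (hg01 y)
      linarith
  have hABle : A ≤ B := by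
    have hev : ∀ᶠ m : ℕ in atTop, A - B ≤ 1 / (m:ℝ) := by
      filter_upwards [eventually_ge_atTop 1] with m hm
      have h := (key m hm).1
      have hmpos : (0:ℝ) < m := by exact_mod_cast hm
      rw [le_div_iff₀ hmpos]
      nlinarith
    have := ge_of_tendsto tendsto_one_div_atTop_nhds_zero_nat hev
    linarith
  have hBAle : B ≤ A := by
    have hev : ∀ᶠ m : ℕ in atTop, B - A ≤ 1 / (m:ℝ) := by
      filter_upwards [eventually_ge_atTop 1] with m hm
      have h := (key m hm).2
      have hmpos : (0:ℝ) < m := by exact_mod_cast hm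
      rw [le_div_iff₀ hmpos]
      nlinarith
    have := ge_of_tendsto tendsto_one_div_atTop_nhds_zero_nat hev
    linarith
  linarith

lemma UF_frequently {p : ℕ → Prop} (h : ∀ᶠ N in (UF : Filter ℕ), p N) :
    ∃ᶠ N in atTop, p N := by
  by_contra hcon
  rw [Filter.not_frequently] at hcon
  have h2 : ∀ᶠ N in (UF : Filter ℕ), ¬ p N := UF_le_atTop hcon
  obtain ⟨N, hN, hN2⟩ := (h.and h2).exists
  exact hN2 hN

lemma real_le_of_forall_pos_le_add {a b : ℝ} (h : ∀ ε : ℝ, 0 < ε → a ≤ b + ε) : a ≤ b := by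
  by_contra hcon
  push_neg at hcon
  have := h ((a - b)/2) (by linarith)
  linarith

end
end FFC

/-- The functional Furstenberg correspondence: for `f : ℤ → [-1,1]` there are a
probability space `(Y, 𝔅, μ)` with an invertible measure-preserving transformation
(given as a measure-preserving `ℤ`-action `T`) and a measurable `F ∈ L^∞(Y)` with
`|F| ≤ 1` a.e. such that for every finite set `U ⊆ ℤ`,
`liminf_N (1/N) ∑_{n=1}^N ∏_{k ∈ U} f(n+k) ≤ ∫ ∏_{k ∈ U} F ∘ T^k dμ
  ≤ limsup_N (1/N) ∑_{n=1}^N ∏_{k ∈ U} f(n+k)`. -/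
theorem functional_furstenberg_correspondence
    (f : ℤ → ℝ) (hf : ∀ n : ℤ, f n ∈ Set.Icc (-1 : ℝ) 1) :
    ∃ (Y : Type) (mY : MeasurableSpace Y) (μ : Measure Y) (T : ℤ → Y → Y) (F : Y → ℝ),
      IsProbabilityMeasure μ ∧
      (∀ n : ℤ, MeasurePreserving (T n) μ μ) ∧
      T 0 = id ∧
      (∀ m n : ℤ, T (m + n) = T m ∘ T n) ∧
      @Measurable Y ℝ mY _ F ∧
      (∀ᵐ y ∂μ, |F y| ≤ 1) ∧
      ∀ U : Finset ℤ,
        Filter.liminf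
            (fun N : ℕ => (∑ n ∈ Finset.Icc 1 N, ∏ k ∈ U, f ((n : ℤ) + k)) / (N : ℝ))
            Filter.atTop
          ≤ ∫ y, ∏ k ∈ U, F (T k y) ∂μ ∧
        ∫ y, ∏ k ∈ U, F (T k y) ∂μ ≤
          Filter.limsup
            (fun N : ℕ => (∑ n ∈ Finset.Icc 1 N, ∏ k ∈ U, f ((n : ℤ) + k)) / (N : ℝ))
            Filter.atTop := by
  classical
  set x : FFC.Y := fun n => ⟨f n, hf n⟩ with hx
  refine ⟨FFC.Y, inferInstance, FFC.mu x, FFC.T, FFC.F,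
    FFC.mu_prob x, FFC.mu_preserving x, FFC.T_zero, FFC.T_add, ?_, ?_, ?_⟩
  · exact FFC.continuous_F.measurable
  · filter_upwards with y
    exact abs_le.mpr ⟨(y 0).2.1, (y 0).2.2⟩
  intro U
  haveI := FFC.mu_prob x
  set G : FFC.Y → ℝ := fun y => ∏ k ∈ U, FFC.F (FFC.T k y) with hG
  have hGc : Continuous G := by
    apply continuous_finset_prod
    intro k _
    exact FFC.continuous_F.comp (FFC.continuous_T k)
  have hGabs : ∀ y, |G y| ≤ 1 := by
    intro y
    rw [hG, Finset.abs_prod]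
    refine Finset.prod_le_one (fun k _ => abs_nonneg _) (fun k _ => ?_)
    exact abs_le.mpr ⟨(FFC.T k y 0).2.1, (FFC.T k y 0).2.2⟩
  set g : FFC.Y → ℝ := fun y => (G y + 1) / 2 with hg
  have hgc : Continuous g := (hGc.add continuous_const).div_const 2
  have hg01 : ∀ y, g y ∈ Set.Icc (0:ℝ) 1 := by
    intro y
    have h := abs_le.mp (hGabs y)
    constructor
    · show (0:ℝ) ≤ (G y + 1) / 2
      linarith [h.1]
    · show (G y + 1) / 2 ≤ 1
      linarith [h.2]
  have hint : ∀ (ν : Measure FFC.Y), IsProbabilityMeasure ν →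
      ∫ y, g y ∂ν = ((∫ y, G y ∂ν) + 1) / 2 := by
    intro ν hν
    haveI := hν
    show ∫ y, (G y + 1) / 2 ∂ν = _
    rw [integral_div, integral_add (FFC.cont_integrable hGc) (integrable_const 1),
      integral_const]
    simp
  set a : ℕ → ℝ := fun N => (∑ n ∈ Finset.Icc 1 N, ∏ k ∈ U, f ((n : ℤ) + k)) / (N : ℝ) with ha
  have habs : ∀ N : ℕ, |a N| ≤ 1 := by
    intro N
    rcases Nat.eq_zero_or_pos N with h0 | hpos
    · subst h0
      simp [ha]
    · have hNpos : (0:ℝ) < N := by exact_mod_cast hpos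
      rw [ha]
      show |(∑ n ∈ Finset.Icc 1 N, ∏ k ∈ U, f ((n : ℤ) + k)) / (N : ℝ)| ≤ 1
      rw [abs_div, abs_of_pos hNpos, div_le_one hNpos]
      calc |∑ n ∈ Finset.Icc 1 N, ∏ k ∈ U, f ((n : ℤ) + k)|
          ≤ ∑ n ∈ Finset.Icc 1 N, |∏ k ∈ U, f ((n : ℤ) + k)| :=
            Finset.abs_sum_le_sum_abs _ _
        _ ≤ ∑ _n ∈ Finset.Icc 1 N, (1:ℝ) := by
            refine Finset.sum_le_sum (fun n _ => ?_)
            rw [Finset.abs_prod]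
            exact Finset.prod_le_one (fun _ _ => abs_nonneg _)
              (fun k _ => abs_le.mpr ⟨(hf _).1, (hf _).2⟩)
        _ = N := by simp
  have key : ∀ N : ℕ, 1 ≤ N → ∫ y, G y ∂(FFC.nu x N) = a N := by
    intro N hN
    rw [FFC.integral_nu_def x hGc N]
    have hpt : ∀ m : ℤ, G (FFC.T m x) = ∏ k ∈ U, f (m + k) := by
      intro m
      rw [hG]
      refine Finset.prod_congr rfl (fun k _ => ?_)
      show FFC.F (FFC.T k (FFC.T m x)) = f (m + k)
      have h1 : FFC.T k (FFC.T m x) = FFC.T (k + m) x := by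
        rw [FFC.T_add]
        rfl
      rw [h1]
      show ((x (0 + (k + m))) : ℝ) = f (m + k)
      rw [hx]
      show f (0 + (k + m)) = f (m + k)
      congr 1
      ring
    rw [Finset.sum_congr rfl (fun m _ => hpt m), ha, inv_mul_eq_div]
    show (∑ m ∈ Finset.Icc (1:ℤ) (N:ℤ), ∏ k ∈ U, f (m + k)) / (N:ℝ)
      = (∑ n ∈ Finset.Icc 1 N, ∏ k ∈ U, f ((n : ℤ) + k)) / (N : ℝ)
    congr 1
    refine Finset.sum_bij' (fun m _ => m.toNat) (fun n _ => (n : ℤ)) ?_ ?_ ?_ ?_ ?_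
    · intro m hm
      show m.toNat ∈ Finset.Icc 1 N
      simp only [Finset.mem_Icc] at *
      omega
    · intro n hn
      show (n:ℤ) ∈ Finset.Icc (1:ℤ) (N:ℤ)
      simp only [Finset.mem_Icc] at *
      omega
    · intro m hm
      show ((m.toNat : ℤ)) = m
      simp only [Finset.mem_Icc] at hm
      omega
    · intro n hn
      show ((n:ℤ)).toNat = n
      omega
    · intro m hm
      show (∏ k ∈ U, f (m + k)) = ∏ k ∈ U, f (((m.toNat : ℤ)) + k)
      simp only [Finset.mem_Icc] at hm
      have h : ((m.toNat : ℤ)) = m := by omega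
      rw [h]
  set I := ∫ y, G y ∂(FFC.mu x) with hI
  have htend : Tendsto a (FFC.UF : Filter ℕ) (𝓝 I) := by
    have hBtend : Tendsto (fun N => ∫ y, g y ∂(FFC.nu x N)) (FFC.UF : Filter ℕ)
        (𝓝 (∫ y, g y ∂(FFC.mu x))) := by
      rw [FFC.integral_mu_eq x hgc hg01]
      exact FFC.tendsto_ulim (FFC.exists_ulim (FFC.integral_nu_mem x hgc hg01))
    have h2 : Tendsto (fun N => 2 * (∫ y, g y ∂(FFC.nu x N)) - 1) (FFC.UF : Filter ℕ)
        (𝓝 (2 * (∫ y, g y ∂(FFC.mu x)) - 1)) :=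
      (hBtend.const_mul 2).sub tendsto_const_nhds
    have hIeq : 2 * (∫ y, g y ∂(FFC.mu x)) - 1 = I := by
      rw [hint _ (FFC.mu_prob x), hI]
      ring
    rw [hIeq] at h2
    apply h2.congr'
    filter_upwards [FFC.UF_le_atTop (eventually_ge_atTop 1)] with N hN
    haveI := FFC.nu_prob x hN
    rw [hint _ (FFC.nu_prob x hN), key N hN]
    ring
  have hbdd_above : IsBoundedUnder (· ≤ ·) atTop a :=
    isBoundedUnder_of ⟨1, fun N => (abs_le.mp (habs N)).2⟩
  have hbdd_below : IsBoundedUnder (· ≥ ·) atTop a :=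
    isBoundedUnder_of ⟨-1, fun N => (abs_le.mp (habs N)).1⟩
  constructor
  · refine FFC.real_le_of_forall_pos_le_add (fun ε hε => ?_)
    refine liminf_le_of_frequently_le ?_ hbdd_below
    exact FFC.UF_frequently (htend.eventually_le_const (lt_add_of_pos_right I hε))
  · refine FFC.real_le_of_forall_pos_le_add (fun ε hε => ?_)
    have h1 : I - ε ≤ limsup a atTop := by
      refine le_limsup_of_frequently_le ?_ hbdd_above
      exact FFC.UF_frequently (htend.eventually_const_le (by linarith))
    linarith
end

section
/- Let Y be a compact topological space and let 𝒮 be a collection of subsets of Y, each of which is either open or closed, that is closed under complements. Let 𝒞 be the algebra of subsets of Y generated from 𝒮 by finite unions and finite intersections. Let ν : 𝒞 → [0, ∞) be finitely additive, and suppose that for every open set C ∈ 𝒮, ν(C) = sup{ν(D) : D ⊆ C, D ∈ 𝒞, D closed}. Then for every C ∈ 𝒞 and every ε > 0 there exists a closed set D ∈ 𝒞 with D ⊆ C and ν(C) − ν(D) < ε. -/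
open Filter
open scoped Classical

/-- The collection of sets generated from `S` by finite unions and finite
intersections. -/
inductive SetAlgebraGen {Y : Type} (S : Set (Set Y)) : Set Y → Prop
  | base {A : Set Y} : A ∈ S → SetAlgebraGen S A
  | union {A B : Set Y} : SetAlgebraGen S A → SetAlgebraGen S B → SetAlgebraGen S (A ∪ B)
  | inter {A B : Set Y} : SetAlgebraGen S A → SetAlgebraGen S B → SetAlgebraGen S (A ∩ B)

theorem SetAlgebraGen.compl {Y : Type} {S : Set (Set Y)}
    (hScompl : ∀ A ∈ S, Aᶜ ∈ S) {A : Set Y} (h : SetAlgebraGen S A) :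
    SetAlgebraGen S Aᶜ := by
  induction h with
  | base hA => exact .base (hScompl _ hA)
  | union _ _ ihA ihB => rw [Set.compl_union]; exact .inter ihA ihB
  | inter _ _ ihA ihB => rw [Set.compl_inter]; exact .union ihA ihB

theorem SetAlgebraGen.diff {Y : Type} {S : Set (Set Y)}
    (hScompl : ∀ A ∈ S, Aᶜ ∈ S) {A B : Set Y}
    (hA : SetAlgebraGen S A) (hB : SetAlgebraGen S B) :
    SetAlgebraGen S (A \ B) := by
  rw [Set.diff_eq]; exact .inter hA (hB.compl hScompl)

/-- Inner regularity by closed sets: if `Y` is compact, `𝒮` is a family of subsets,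
each open or closed, closed under complements, `𝒞` is the algebra generated from `𝒮`
by finite unions and intersections, and `ν` is a nonnegative finitely additive function
on `𝒞` such that every open `C ∈ 𝒮` satisfies `ν C = sup{ν D : D ⊆ C closed, D ∈ 𝒞}`,
then every `C ∈ 𝒞` can be approximated in `ν` from inside by closed sets of `𝒞`. -/
theorem inner_regular_on_algebra
    (Y : Type) [TopologicalSpace Y] [CompactSpace Y]
    (S : Set (Set Y))
    (hS : ∀ A ∈ S, IsOpen A ∨ IsClosed A)
    (hScompl : ∀ A ∈ S, Aᶜ ∈ S)
    (ν : Set Y → ℝ)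
    (hν0 : ∀ A : Set Y, SetAlgebraGen S A → 0 ≤ ν A)
    (hadd : ∀ A B : Set Y, SetAlgebraGen S A → SetAlgebraGen S B → Disjoint A B →
      ν (A ∪ B) = ν A + ν B)
    (hreg : ∀ C ∈ S, IsOpen C → ∀ ε > (0 : ℝ),
      ∃ D : Set Y, SetAlgebraGen S D ∧ IsClosed D ∧ D ⊆ C ∧ ν C - ν D < ε) :
    ∀ C : Set Y, SetAlgebraGen S C → ∀ ε > (0 : ℝ),
      ∃ D : Set Y, SetAlgebraGen S D ∧ IsClosed D ∧ D ⊆ C ∧ ν C - ν D < ε := by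
  -- ν of a difference
  have hdiff : ∀ A B : Set Y, SetAlgebraGen S A → SetAlgebraGen S B → B ⊆ A →
      ν A = ν B + ν (A \ B) := by
    intro A B hA hB hBA
    have : A = B ∪ (A \ B) := by rw [Set.union_diff_cancel hBA]
    conv_lhs => rw [this]
    rw [hadd _ _ hB (hA.diff hScompl hB) disjoint_sdiff_self_right]
  -- monotonicity
  have hmono : ∀ A B : Set Y, SetAlgebraGen S A → SetAlgebraGen S B → A ⊆ B →
      ν A ≤ ν B := by
    intro A B hA hB hAB
    rw [hdiff B A hB hA hAB]
    linarith [hν0 _ (hB.diff hScompl hA)]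
  -- subadditivity
  have hsub : ∀ A B : Set Y, SetAlgebraGen S A → SetAlgebraGen S B →
      ν (A ∪ B) ≤ ν A + ν B := by
    intro A B hA hB
    have h1 : A ∪ B = A ∪ (B \ A) := by rw [Set.union_diff_self]
    rw [h1, hadd _ _ hA (hB.diff hScompl hA) disjoint_sdiff_self_right]
    have := hmono (B \ A) B (hB.diff hScompl hA) hB Set.diff_subset
    linarith
  intro C hC
  induction hC with
  | @base A hA =>
    intro ε hε
    rcases hS A hA with hopen | hclosed
    · exact hreg A hA hopen ε hε
    · exact ⟨A, .base hA, hclosed, subset_rfl, by linarith⟩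
  | @union A B hA hB ihA ihB =>
    intro ε hε
    obtain ⟨DA, hDA, hDAc, hDAs, hDAν⟩ := ihA (ε / 2) (by linarith)
    obtain ⟨DB, hDB, hDBc, hDBs, hDBν⟩ := ihB (ε / 2) (by linarith)
    refine ⟨DA ∪ DB, .union hDA hDB, hDAc.union hDBc,
      Set.union_subset_union hDAs hDBs, ?_⟩
    have hCalg : SetAlgebraGen S (A ∪ B) := .union hA hB
    have hDalg : SetAlgebraGen S (DA ∪ DB) := .union hDA hDB
    have key : ν (A ∪ B) - ν (DA ∪ DB) = ν ((A ∪ B) \ (DA ∪ DB)) := by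
      have := hdiff (A ∪ B) (DA ∪ DB) hCalg hDalg (Set.union_subset_union hDAs hDBs)
      linarith
    have hsubset : (A ∪ B) \ (DA ∪ DB) ⊆ (A \ DA) ∪ (B \ DB) := by
      rintro x ⟨hx, hnx⟩
      simp only [Set.mem_union, Set.mem_diff] at *
      rcases hx with h | h
      · exact Or.inl ⟨h, fun hc => hnx (Or.inl hc)⟩
      · exact Or.inr ⟨h, fun hc => hnx (Or.inr hc)⟩
    have h1 : ν ((A ∪ B) \ (DA ∪ DB)) ≤ ν ((A \ DA) ∪ (B \ DB)) :=
      hmono _ _ (hCalg.diff hScompl hDalg)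
        (.union (hA.diff hScompl hDA) (hB.diff hScompl hDB)) hsubset
    have h2 := hsub (A \ DA) (B \ DB) (hA.diff hScompl hDA) (hB.diff hScompl hDB)
    have h3 := hdiff A DA hA hDA hDAs
    have h4 := hdiff B DB hB hDB hDBs
    linarith
  | @inter A B hA hB ihA ihB =>
    intro ε hε
    obtain ⟨DA, hDA, hDAc, hDAs, hDAν⟩ := ihA (ε / 2) (by linarith)
    obtain ⟨DB, hDB, hDBc, hDBs, hDBν⟩ := ihB (ε / 2) (by linarith)
    refine ⟨DA ∩ DB, .inter hDA hDB, hDAc.inter hDBc,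
      Set.inter_subset_inter hDAs hDBs, ?_⟩
    have hCalg : SetAlgebraGen S (A ∩ B) := .inter hA hB
    have hDalg : SetAlgebraGen S (DA ∩ DB) := .inter hDA hDB
    have key : ν (A ∩ B) - ν (DA ∩ DB) = ν ((A ∩ B) \ (DA ∩ DB)) := by
      have := hdiff (A ∩ B) (DA ∩ DB) hCalg hDalg (Set.inter_subset_inter hDAs hDBs)
      linarith
    have hsubset : (A ∩ B) \ (DA ∩ DB) ⊆ (A \ DA) ∪ (B \ DB) := by
      rintro x ⟨⟨hxA, hxB⟩, hnx⟩
      simp only [Set.mem_union, Set.mem_diff, Set.mem_inter_iff, not_and] at *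
      by_cases h : x ∈ DA
      · exact Or.inr ⟨hxB, hnx h⟩
      · exact Or.inl ⟨hxA, h⟩
    have h1 : ν ((A ∩ B) \ (DA ∩ DB)) ≤ ν ((A \ DA) ∪ (B \ DB)) :=
      hmono _ _ (hCalg.diff hScompl hDalg)
        (.union (hA.diff hScompl hDA) (hB.diff hScompl hDB)) hsubset
    have h2 := hsub (A \ DA) (B \ DB) (hA.diff hScompl hDA) (hB.diff hScompl hDB)
    have h3 := hdiff A DA hA hDA hDAs
    have h4 := hdiff B DB hB hDB hDBs
    linarith
end

section
/- Let Y be a compact topological space, 𝒞 an algebra of subsets of Y, and ν : 𝒞 → [0, ∞) a finitely additive function such that: (i) for every C ∈ 𝒞 and ε > 0 there is a closed set D ∈ 𝒞 with D ⊆ C and ν(C) − ν(D) < ε, and (ii) for every C ∈ 𝒞 and ε > 0 there is an open set D ∈ 𝒞 with C ⊆ D and ν(D) − ν(C) < ε. Then ν is countably additive on 𝒞: whenever {C_i}_{i∈ℕ} ⊆ 𝒞 are pairwise disjoint and C = ⋃_{i∈ℕ} C_i ∈ 𝒞, one has ν(C) = Σ_{i∈ℕ} ν(C_i). -/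
open Filter
open scoped Classical

/-- σ-additivity from two-sided regularity on a compact space: if `𝒞` is an algebra of
subsets of a compact space `Y` and `ν : 𝒞 → [0,∞)` is finitely additive, inner regular
by closed sets of `𝒞` and outer regular by open sets of `𝒞`, then `ν` is countably
additive on `𝒞`. -/
theorem sigma_additive_of_regular
    (Y : Type) [TopologicalSpace Y] [CompactSpace Y]
    (C : Set (Set Y))
    (hempty : ∅ ∈ C) (huniv : Set.univ ∈ C)
    (hcompl : ∀ A ∈ C, Aᶜ ∈ C)
    (hunion : ∀ A ∈ C, ∀ B ∈ C, A ∪ B ∈ C)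
    (hinterC : ∀ A ∈ C, ∀ B ∈ C, A ∩ B ∈ C)
    (ν : Set Y → ℝ)
    (hν0 : ∀ A ∈ C, 0 ≤ ν A)
    (hadd : ∀ A ∈ C, ∀ B ∈ C, Disjoint A B → ν (A ∪ B) = ν A + ν B)
    (hinner : ∀ A ∈ C, ∀ ε > (0 : ℝ), ∃ D ∈ C, IsClosed D ∧ D ⊆ A ∧ ν A - ν D < ε)
    (houter : ∀ A ∈ C, ∀ ε > (0 : ℝ), ∃ D ∈ C, IsOpen D ∧ A ⊆ D ∧ ν D - ν A < ε) :
    ∀ Cs : ℕ → Set Y, (∀ i, Cs i ∈ C) → Pairwise (Function.onFun Disjoint Cs) →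
      (⋃ i, Cs i) ∈ C → HasSum (fun i => ν (Cs i)) (ν (⋃ i, Cs i)) := by
  intro Cs hCs hdisj hUmem
  -- difference sets
  have hdiff : ∀ A ∈ C, ∀ B ∈ C, B \ A ∈ C := by
    intro A hA B hB
    rw [Set.diff_eq]
    exact hinterC B hB Aᶜ (hcompl A hA)
  -- monotonicity
  have hmono : ∀ A ∈ C, ∀ B ∈ C, A ⊆ B → ν A ≤ ν B := by
    intro A hA B hB hAB
    have h1 : ν B = ν A + ν (B \ A) := by
      conv_lhs => rw [← Set.union_diff_cancel hAB]
      exact hadd A hA (B \ A) (hdiff A hA B hB) Set.disjoint_sdiff_right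
    have := hν0 (B \ A) (hdiff A hA B hB)
    linarith
  -- subadditivity for two sets
  have hsub2 : ∀ A ∈ C, ∀ B ∈ C, ν (A ∪ B) ≤ ν A + ν B := by
    intro A hA B hB
    have h1 : A ∪ B = A ∪ (B \ A) := by simp
    have h2 : ν (A ∪ B) = ν A + ν (B \ A) := by
      rw [h1]; exact hadd A hA (B \ A) (hdiff A hA B hB) Set.disjoint_sdiff_right
    have h3 : ν (B \ A) ≤ ν B :=
      hmono (B \ A) (hdiff A hA B hB) B hB Set.diff_subset
    linarith
  -- finite unions are in C
  have hmemF : ∀ (s : Finset ℕ) (A : ℕ → Set Y), (∀ i, A i ∈ C) →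
      (⋃ i ∈ s, A i) ∈ C := by
    intro s A hA
    induction s using Finset.induction with
    | empty => simpa using hempty
    | insert _ _ hx ih =>
      rw [Finset.set_biUnion_insert]
      exact hunion _ (hA _) _ ih
  -- finite subadditivity
  have hsubF : ∀ (s : Finset ℕ) (A : ℕ → Set Y), (∀ i, A i ∈ C) →
      ν (⋃ i ∈ s, A i) ≤ ∑ i ∈ s, ν (A i) := by
    intro s A hA
    induction s using Finset.induction with
    | empty =>
      simp only [Finset.notMem_empty, Set.iUnion_of_empty, Set.iUnion_empty, Finset.sum_empty]
      have : ν ∅ = 0 := by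
        have := hadd ∅ hempty ∅ hempty (by simp)
        simpa using this
      simp [this]
    | @insert a s hx ih =>
      rw [Finset.set_biUnion_insert, Finset.sum_insert hx]
      calc ν (A a ∪ ⋃ i ∈ s, A i) ≤ ν (A a) + ν (⋃ i ∈ s, A i) :=
            hsub2 _ (hA a) _ (hmemF s A hA)
        _ ≤ ν (A a) + ∑ i ∈ s, ν (A i) := by linarith
  -- finite additivity on ranges
  have haddF : ∀ n : ℕ, ν (⋃ i ∈ Finset.range n, Cs i)
      = ∑ i ∈ Finset.range n, ν (Cs i) := by
    intro n
    induction n with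
    | zero =>
      simp only [Finset.range_zero, Finset.notMem_empty, Set.iUnion_of_empty, Set.iUnion_empty, Finset.sum_empty]
      have := hadd ∅ hempty ∅ hempty (by simp)
      simpa using this
    | succ n ih =>
      rw [Finset.range_add_one, Finset.set_biUnion_insert, Finset.sum_insert (by simp),
        Set.union_comm]
      have hd : Disjoint (⋃ i ∈ Finset.range n, Cs i) (Cs n) := by
        apply Set.disjoint_iUnion_left.2; intro i
        apply Set.disjoint_iUnion_left.2; intro hi
        exact hdisj (by simp at hi; omega)
      rw [hadd _ (hmemF _ Cs hCs) _ (hCs n) hd, ih]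
      ring
  -- partial sums bounded
  have hbdd : ∀ n : ℕ, ∑ i ∈ Finset.range n, ν (Cs i) ≤ ν (⋃ i, Cs i) := by
    intro n
    rw [← haddF n]
    exact hmono _ (hmemF _ Cs hCs) _ hUmem
      (Set.iUnion₂_subset fun i _ => Set.subset_iUnion Cs i)
  have hsummable : Summable fun i => ν (Cs i) :=
    summable_of_sum_range_le (fun i => hν0 _ (hCs i)) hbdd
  -- tsum ≤ ν(⋃)
  have htsum_le : ∑' i, ν (Cs i) ≤ ν (⋃ i, Cs i) :=
    Summable.tsum_le_of_sum_range_le hsummable hbdd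
  -- ν(⋃) ≤ tsum
  have hle : ν (⋃ i, Cs i) ≤ ∑' i, ν (Cs i) := by
    apply le_of_forall_pos_le_add
    intro ε hε
    obtain ⟨D, hD, hDclosed, hDsub, hDν⟩ :=
      hinner (⋃ i, Cs i) hUmem (ε / 2) (by linarith)
    have hεi : ∀ i : ℕ, (0:ℝ) < ε / 4 * (1/2)^i := by
      intro i; positivity
    choose U hUm hUopen hUsub hUν using fun i =>
      houter (Cs i) (hCs i) (ε / 4 * (1/2)^i) (hεi i)
    have hDcomp : IsCompact D := hDclosed.isCompact
    obtain ⟨t, ht⟩ := hDcomp.elim_finite_subcover U hUopen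
      (hDsub.trans (Set.iUnion_mono fun i => hUsub i))
    have hgeo : ∑ i ∈ t, ((1:ℝ)/2)^i ≤ 2 := by
      have h1 : ∑ i ∈ t, ((1:ℝ)/2)^i ≤ ∑' i : ℕ, ((1:ℝ)/2)^i := by
        apply Summable.sum_le_tsum t (fun i _ => by positivity)
        exact summable_geometric_of_lt_one (by norm_num) (by norm_num)
      have h2 : ∑' i : ℕ, ((1:ℝ)/2)^i = 2 := by
        rw [tsum_geometric_of_lt_one (by norm_num) (by norm_num)]; norm_num
      linarith
    have hνD : ν D ≤ ∑' i, ν (Cs i) + ε / 2 := by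
      calc ν D ≤ ν (⋃ i ∈ t, U i) := hmono D hD _ (hmemF t U hUm) ht
        _ ≤ ∑ i ∈ t, ν (U i) := hsubF t U hUm
        _ ≤ ∑ i ∈ t, (ν (Cs i) + ε / 4 * (1/2)^i) :=
            Finset.sum_le_sum (fun i _ => by have := hUν i; linarith)
        _ = ∑ i ∈ t, ν (Cs i) + ε / 4 * ∑ i ∈ t, (1/2:ℝ)^i := by
            rw [Finset.sum_add_distrib, Finset.mul_sum]
        _ ≤ ∑' i, ν (Cs i) + ε / 4 * 2 := by
            have h1 : ∑ i ∈ t, ν (Cs i) ≤ ∑' i, ν (Cs i) :=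
              Summable.sum_le_tsum t (fun i _ => hν0 _ (hCs i)) hsummable
            have h2 : ε / 4 * ∑ i ∈ t, (1/2:ℝ)^i ≤ ε / 4 * 2 := by
              apply mul_le_mul_of_nonneg_left hgeo (by linarith)
            linarith
        _ = ∑' i, ν (Cs i) + ε / 2 := by ring
    linarith
  have heq : ν (⋃ i, Cs i) = ∑' i, ν (Cs i) := le_antisymm hle htsum_le
  rw [heq]
  exact hsummable.hasSum
end
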